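/- arXiv:2510.21650 — 11 statements merged into one kernel-verified Lean document; each statement's English description precedes it below -/
import Mathlib

section
/- (Proposition: terminal comparison at an intermediate deadline T_k.) Let u : 𝒮̄ → ℝ be upper semicontinuous such that for every x ∈ 𝒮: u(x) ≤ inf_{0≤θ≤x₀}[ w_k(G_k − θ)⁺ + f(x₀ − θ, x₁) ] and u(x) ≤ M[u]^*(x). Let v : 𝒮̄ → ℝ be lower semicontinuous such that for every x ∈ 𝒮: v(x) ≥ inf_{0≤θ≤x₀}[ w_k(G_k − θ)⁺ + f(x₀ − θ, x₁) ] or v(x) ≥ M[v]_*(x). Assume u((0,0)) ≤ v((0,0)), v((0,0)) = Σ_{i=k}^K w_i G_i, and for all x ∈ 𝒮̄: 0 ≤ u(x) ≤ Σ_{i=k}^K w_i G_i and −c(1 + |x|^{p₀}) ≤ v(x) ≤ Σ_{i=k}^K w_i G_i. Then u(x) ≤ v(x) for all x ∈ 𝒮̄. -/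
open Set Filter

/-- The closed positive quadrant of portfolio positions. -/
def Sbar : Set (ℝ × ℝ) := Set.Ici 0 ×ˢ Set.Ici 0

/-- The positive quadrant without the origin. -/
def Sset : Set (ℝ × ℝ) := Sbar \ {(0, 0)}

/-- A transaction cost function. -/
def IsCostFn (C : ℝ → ℝ) : Prop :=
  Continuous C ∧ (∀ d₁ d₂ : ℝ, |d₁| ≤ |d₂| → C d₁ ≤ C d₂) ∧ 0 < C 0 ∧
    StrictMono (fun d => d + C d) ∧ Set.Ici (0 : ℝ) ⊆ Set.range (fun d => d + C d)

/-- The rebalancing map. -/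
def Gam (C : ℝ → ℝ) (x : ℝ × ℝ) (d : ℝ) : ℝ × ℝ := (x.1 - d - C d, x.2 + d)

/-- The set of feasible transactions. -/
def Dset (C : ℝ → ℝ) (x : ℝ × ℝ) : Set ℝ := {d | Gam C x d ∈ Sbar}

/-- The intervention operator, with value `+∞` if no transaction is feasible. -/
noncomputable def Mop (C : ℝ → ℝ) (g : ℝ × ℝ → ℝ) (x : ℝ × ℝ) : EReal :=
  ⨅ d ∈ Dset C x, ((g (Gam C x d) : ℝ) : EReal)

/-- Upper semicontinuous envelope of `h` computed on `E`. -/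
noncomputable def uscEnv {α : Type*} [TopologicalSpace α]
    (h : α → EReal) (E : Set α) (z : α) : EReal :=
  Filter.limsup h (nhdsWithin z E)

/-- Lower semicontinuous envelope of `h` computed on `E`. -/
noncomputable def lscEnv {α : Type*} [TopologicalSpace α]
    (h : α → EReal) (E : Set α) (z : α) : EReal :=
  Filter.liminf h (nhdsWithin z E)

/-- Euclidean norm on `ℝ²`. -/
noncomputable def eunorm (p : ℝ × ℝ) : ℝ := Real.sqrt (p.1 ^ 2 + p.2 ^ 2)

/-!
For `ε > 0`, maximise `u - v - ε (x₀ + x₁)` over the compact set of positions whose total holdings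
do not exceed those of a given point; since every transaction pays a positive cost, this set is
stable under transactions. At a maximiser `x ≠ 0` either the terminal obstacle already separates
`u` and `v`, or the supersolution inequality yields a limiting feasible transaction `d` with
`v (Γ(x, d)) ≤ v x + δ`. Unless `Γ(x, d) = 0`, the feasible set at `x` is a nondegenerate interval,
and the subsolution inequality, applied at interior transactions and passed to the limit by upper
semicontinuity, gives `u x ≤ u (Γ(x, d))`; the penalty `ε C(d) ≥ ε C(0) > 2δ` then contradicts
maximality. If `Γ(x, d) = 0` the bound `u ≤ v (0, 0)` does the same job. Finally let `ε → 0`.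
-/

open Topology

theorem UpperSemicontinuousWithinAt.ge_of_tendsto {α β ι : Type*} [TopologicalSpace α]
    [LinearOrder β] {f : α → β} {s : Set α} {x : α} (hf : UpperSemicontinuousWithinAt f s x)
    {l : Filter ι} [l.NeBot] {g : ι → α} (hg : Tendsto g l (𝓝[s] x)) {b : β}
    (hb : ∀ᶠ i in l, b ≤ f (g i)) : b ≤ f x := by
  by_contra! h
  obtain ⟨i, hlt, hle⟩ := ((hg.eventually (hf b h)).and hb).exists
  exact hlt.not_ge hle

theorem LowerSemicontinuousWithinAt.le_of_tendsto {α β ι : Type*} [TopologicalSpace α]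
    [LinearOrder β] {f : α → β} {s : Set α} {x : α} (hf : LowerSemicontinuousWithinAt f s x)
    {l : Filter ι} [l.NeBot] {g : ι → α} (hg : Tendsto g l (𝓝[s] x)) {b : β}
    (hb : ∀ᶠ i in l, f (g i) ≤ b) : f x ≤ b :=
  UpperSemicontinuousWithinAt.ge_of_tendsto (β := βᵒᵈ) hf hg hb

theorem UpperSemicontinuousOn.sub_lowerSemicontinuousOn {α : Type*} [TopologicalSpace α]
    {f g : α → ℝ} {s : Set α} (hf : UpperSemicontinuousOn f s) (hg : LowerSemicontinuousOn g s) :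
    UpperSemicontinuousOn (fun x => f x - g x) s := by
  have := hf.add (continuous_neg.comp_lowerSemicontinuousOn_antitone hg fun _ _ => neg_le_neg)
  simp only [Function.comp_def, ← sub_eq_add_neg] at this
  exact this

namespace IsCostFn

variable {C : ℝ → ℝ}

protected theorem continuous (hC : IsCostFn C) : Continuous C := hC.1

protected theorem strictMono (hC : IsCostFn C) : StrictMono fun d => d + C d := hC.2.2.2.1

theorem exists_add_eq (hC : IsCostFn C) {a : ℝ} (ha : 0 ≤ a) : ∃ b, b + C b = a :=
  hC.2.2.2.2 ha

theorem cost_zero_le (hC : IsCostFn C) (d : ℝ) : C 0 ≤ C d :=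
  hC.2.1 0 d (by simp)

theorem cost_pos (hC : IsCostFn C) (d : ℝ) : 0 < C d :=
  hC.2.2.1.trans_le (hC.cost_zero_le d)

end IsCostFn

theorem mem_Sbar {x : ℝ × ℝ} : x ∈ Sbar ↔ 0 ≤ x.1 ∧ 0 ≤ x.2 := by
  simp [Sbar, Prod.le_def]

theorem isClosed_Sbar : IsClosed Sbar := isClosed_Ici.prod isClosed_Ici

theorem isCompact_Sbar_inter_sum_le (R : ℝ) : IsCompact (Sbar ∩ {p | p.1 + p.2 ≤ R}) := by
  refine (isCompact_Icc (a := ((0 : ℝ), (0 : ℝ))) (b := (R, R))).of_isClosed_subset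
    (isClosed_Sbar.inter (isClosed_le (by fun_prop) continuous_const)) ?_
  rintro p ⟨hp, hpR⟩
  have := mem_Sbar.1 hp
  exact ⟨⟨this.1, this.2⟩, by simp only [mem_ofPred_eq] at hpR; constructor <;> linarith⟩

section Transactions

variable {C : ℝ → ℝ} {x : ℝ × ℝ} {d : ℝ}

theorem mem_Dset : d ∈ Dset C x ↔ -x.2 ≤ d ∧ d + C d ≤ x.1 := by
  simp only [Dset, Gam, mem_ofPred_eq, mem_Sbar]
  constructor <;> rintro ⟨h₁, h₂⟩ <;> constructor <;> linarith

theorem continuous_gam (hC : IsCostFn C) : Continuous fun p : (ℝ × ℝ) × ℝ => Gam C p.1 p.2 := by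
  have := hC.continuous
  unfold Gam
  fun_prop

theorem gam_fst_add_snd (C : ℝ → ℝ) (x : ℝ × ℝ) (d : ℝ) :
    (Gam C x d).1 + (Gam C x d).2 = x.1 + x.2 - C d := by
  simp only [Gam]; ring

theorem Dset_eq_Icc (hC : IsCostFn C) {b : ℝ} (hb : b + C b = x.1) :
    Dset C x = Icc (-x.2) b := by
  ext d
  rw [mem_Dset, ← hb, hC.strictMono.le_iff_le, mem_Icc]

theorem abs_le_norm_of_mem_Dset (hC : IsCostFn C) (hd : d ∈ Dset C x) : |d| ≤ ‖x‖ := by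
  obtain ⟨h₁, h₂⟩ := mem_Dset.1 hd
  have := hC.cost_pos d
  rw [Prod.norm_def, abs_le]
  constructor
  · linarith [le_max_right ‖x.1‖ ‖x.2‖, le_abs_self x.2, Real.norm_eq_abs x.2]
  · linarith [le_max_left ‖x.1‖ ‖x.2‖, le_abs_self x.1, Real.norm_eq_abs x.1]

end Transactions

section Subsolution

variable {C : ℝ → ℝ} {u : ℝ × ℝ → ℝ} {x : ℝ × ℝ}

theorem eventually_mem_Dset {e : ℝ} (he : -x.2 < e) (he' : e + C e < x.1) :
    ∀ᶠ x' in 𝓝 x, e ∈ Dset C x' := by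
  filter_upwards [continuous_snd.neg.continuousAt.eventually_lt continuousAt_const he,
    continuousAt_const.eventually_lt continuous_fst.continuousAt he'] with x' h₁ h₂
  exact mem_Dset.2 ⟨h₁.le, h₂.le⟩

theorem le_gam_of_le_uscEnv_Mop_of_lt (hC : IsCostFn C) (hu : UpperSemicontinuousOn u Sbar)
    (hsub : (u x : EReal) ≤ uscEnv (Mop C u) Sbar x) {e : ℝ} (he : -x.2 < e)
    (he' : e + C e < x.1) : u x ≤ u (Gam C x e) := by
  have hD : ∀ᶠ x' in 𝓝[Sbar] x, e ∈ Dset C x' :=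
    (eventually_mem_Dset he he').filter_mono nhdsWithin_le_nhds
  have hΓ : Tendsto (fun x' => Gam C x' e) (𝓝[Sbar] x) (𝓝[Sbar] (Gam C x e)) :=
    tendsto_nhdsWithin_iff.2
      ⟨((continuous_gam hC).comp (continuous_id.prodMk continuous_const)).continuousWithinAt, hD⟩
  refine le_of_forall_gt_imp_ge_of_dense fun y hy => EReal.coe_le_coe_iff.1 (hsub.trans ?_)
  refine limsup_le_of_le (h := ?_)
  filter_upwards [hΓ.eventually (hu _ (mem_Dset.2 ⟨he.le, he'.le⟩) y hy), hD] with x' hlt hx'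
  exact (iInf₂_le e hx').trans (EReal.coe_le_coe_iff.2 hlt.le)

theorem le_gam_of_le_uscEnv_Mop (hC : IsCostFn C) (hu : UpperSemicontinuousOn u Sbar)
    (hx : x ∈ Sbar) (hsub : (u x : EReal) ≤ uscEnv (Mop C u) Sbar x) {d : ℝ}
    (hd : d ∈ Dset C x) (hΓ : Gam C x d ≠ (0, 0)) : u x ≤ u (Gam C x d) := by
  obtain ⟨b, hb⟩ := hC.exists_add_eq (mem_Sbar.1 hx).1
  have hdb : d ∈ Icc (-x.2) b := Dset_eq_Icc hC hb ▸ hd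
  have hlt : -x.2 < b := by
    by_contra! hle
    obtain rfl : d = b := le_antisymm hdb.2 (hle.trans hdb.1)
    apply hΓ
    simp only [Gam, Prod.ext_iff]
    constructor <;> linarith [hdb.1]
  have : (𝓝[Ioo (-x.2) b] d).NeBot := by
    rw [← mem_closure_iff_nhdsWithin_neBot, closure_Ioo hlt.ne]
    exact hdb
  refine UpperSemicontinuousWithinAt.ge_of_tendsto (hu _ hd) (l := 𝓝[Ioo (-x.2) b] d)
    (g := Gam C x) (tendsto_nhdsWithin_iff.2 ⟨?_, ?_⟩) ?_
  · exact ((continuous_gam hC).comp (continuous_const.prodMk continuous_id)).continuousWithinAt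
  · filter_upwards [self_mem_nhdsWithin] with e he
    exact (Dset_eq_Icc hC hb).superset (Ioo_subset_Icc_self he)
  · filter_upwards [self_mem_nhdsWithin] with e he
    exact le_gam_of_le_uscEnv_Mop_of_lt hC hu hsub he.1 (hb ▸ hC.strictMono he.2)

end Subsolution

section Supersolution

variable {C : ℝ → ℝ} {v : ℝ × ℝ → ℝ} {x : ℝ × ℝ}

theorem exists_gam_le_of_lscEnv_Mop_le (hC : IsCostFn C) (hv : LowerSemicontinuousOn v Sbar)
    (hsuper : lscEnv (Mop C v) Sbar x ≤ v x) {δ : ℝ} (hδ : 0 < δ) :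
    ∃ d ∈ Dset C x, v (Gam C x d) ≤ v x + δ := by
  have hfreq : ∃ᶠ y in 𝓝[Sbar] x, ∃ d ∈ Dset C y, v (Gam C y d) < v x + δ := by
    have hlt : lscEnv (Mop C v) Sbar x < ((v x + δ : ℝ) : EReal) :=
      hsuper.trans_lt (EReal.coe_lt_coe_iff.2 (by linarith))
    refine (frequently_lt_of_liminf_lt (h := hlt)).mono fun y hy => ?_
    obtain ⟨d, hd, hlt⟩ := lt_biInf_iff.1 hy
    exact ⟨d, hd, EReal.coe_lt_coe_iff.1 hlt⟩
  obtain ⟨y, hy, hyd⟩ := exists_seq_forall_of_frequently hfreq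
  choose d hd hdv using hyd
  have hy' := tendsto_nhds_of_tendsto_nhdsWithin hy
  -- feasible transactions are bounded by the position, so Bolzano–Weierstrass applies
  obtain ⟨R, hR⟩ := (Metric.isBounded_range_of_tendsto y hy').exists_norm_le
  obtain ⟨dh, -, φ, hφ, hdφ⟩ := (isCompact_closedBall (0 : ℝ) R).tendsto_subseq (x := d)
    fun n => mem_closedBall_zero_iff.2 ((abs_le_norm_of_mem_Dset hC (hd n)).trans (hR _ ⟨n, rfl⟩))
  have hΓ : Tendsto (fun n => Gam C (y (φ n)) (d (φ n))) atTop (𝓝 (Gam C x dh)) :=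
    ((continuous_gam hC).tendsto (x, dh)).comp ((hy'.comp hφ.tendsto_atTop).prodMk_nhds hdφ)
  have hmem : ∀ᶠ n in atTop, Gam C (y (φ n)) (d (φ n)) ∈ Sbar :=
    Eventually.of_forall fun n => hd (φ n)
  have hdh : dh ∈ Dset C x := isClosed_Sbar.mem_of_tendsto hΓ hmem
  exact ⟨dh, hdh, LowerSemicontinuousWithinAt.le_of_tendsto (hv _ hdh)
    (tendsto_nhdsWithin_iff.2 ⟨hΓ, hmem⟩) (Eventually.of_forall fun n => (hdv (φ n)).le)⟩

end Supersolution

section Comparison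

variable {C : ℝ → ℝ} {ψ u v : ℝ × ℝ → ℝ} {ε : ℝ}

theorem penalized_nonpos_of_lscEnv_Mop_le (hC : IsCostFn C) (hu : UpperSemicontinuousOn u Sbar)
    (hv : LowerSemicontinuousOn v Sbar) {x : ℝ × ℝ} (hx : x ∈ Sbar)
    (hsub : (u x : EReal) ≤ uscEnv (Mop C u) Sbar x) (hsuper : lscEnv (Mop C v) Sbar x ≤ v x)
    (hB : u x ≤ v (0, 0)) (hε : 0 < ε)
    (hmax : ∀ d ∈ Dset C x, u (Gam C x d) - v (Gam C x d) - ε * ((Gam C x d).1 + (Gam C x d).2)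
      ≤ u x - v x - ε * (x.1 + x.2)) :
    u x - v x - ε * (x.1 + x.2) ≤ 0 := by
  have hpos : 0 < ε * C 0 := mul_pos hε (hC.cost_pos 0)
  -- the slack `δ` allowed for `v` stays below the penalty `ε * C 0` paid by any transaction
  obtain ⟨d, hd, hvd⟩ := exists_gam_le_of_lscEnv_Mop_le hC hv hsuper (half_pos hpos)
  have hCd : ε * C 0 ≤ ε * C d := mul_le_mul_of_nonneg_left (hC.cost_zero_le d) hε.le
  have hsum := gam_fst_add_snd C x d
  by_cases hΓ : Gam C x d = (0, 0)
  · rw [hΓ] at hvd hsum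
    have hxC : x.1 + x.2 = C d := by simp only at hsum; linarith
    rw [hxC]
    linarith
  · have hud := le_gam_of_le_uscEnv_Mop hC hu hx hsub hd hΓ
    have hmaxd := hmax d hd
    rw [hsum, mul_sub] at hmaxd
    linarith

theorem sub_le_mul_fst_add_snd (hC : IsCostFn C) (hu : UpperSemicontinuousOn u Sbar)
    (hv : LowerSemicontinuousOn v Sbar)
    (hsub : ∀ x ∈ Sset, u x ≤ ψ x ∧ (u x : EReal) ≤ uscEnv (Mop C u) Sbar x)
    (hsuper : ∀ x ∈ Sset, ψ x ≤ v x ∨ lscEnv (Mop C v) Sbar x ≤ v x)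
    (hu0 : u (0, 0) ≤ v (0, 0)) (hB : ∀ x ∈ Sbar, u x ≤ v (0, 0)) (hε : 0 < ε)
    {x₀ : ℝ × ℝ} (hx₀ : x₀ ∈ Sbar) : u x₀ - v x₀ ≤ ε * (x₀.1 + x₀.2) := by
  set K := Sbar ∩ {p : ℝ × ℝ | p.1 + p.2 ≤ x₀.1 + x₀.2}
  have hx₀K : x₀ ∈ K := ⟨hx₀, le_refl (x₀.1 + x₀.2)⟩
  have husc : UpperSemicontinuousOn (fun p => u p - v p - ε * (p.1 + p.2)) K :=
    ((hu.mono inter_subset_left).sub_lowerSemicontinuousOn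
      (hv.mono inter_subset_left)).sub_lowerSemicontinuousOn
        (ContinuousOn.lowerSemicontinuousOn (by fun_prop))
  obtain ⟨x, ⟨hx, hxK : x.1 + x.2 ≤ x₀.1 + x₀.2⟩, hmax⟩ :=
    husc.exists_isMaxOn ⟨x₀, hx₀K⟩ (isCompact_Sbar_inter_sum_le _)
  suffices u x - v x - ε * (x.1 + x.2) ≤ 0 by linarith [isMaxOn_iff.1 hmax x₀ hx₀K]
  by_cases hx0 : x = (0, 0)
  · subst hx0
    simpa using hu0
  have hxS : x ∈ Sset := ⟨hx, hx0⟩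
  rcases hsuper x hxS with hψ | hM
  · have := mul_nonneg hε.le (add_nonneg (mem_Sbar.1 hx).1 (mem_Sbar.1 hx).2)
    linarith [(hsub x hxS).1]
  · refine penalized_nonpos_of_lscEnv_Mop_le hC hu hv hx (hsub x hxS).2 hM (hB x hx) hε
      fun d hd => isMaxOn_iff.1 hmax _ ⟨hd, ?_⟩
    rw [mem_ofPred_eq, gam_fst_add_snd]
    linarith [hC.cost_pos d]

theorem comparison_principle (hC : IsCostFn C)
    (hu : UpperSemicontinuousOn u Sbar) (hv : LowerSemicontinuousOn v Sbar)
    (hsub : ∀ x ∈ Sset, u x ≤ ψ x ∧ (u x : EReal) ≤ uscEnv (Mop C u) Sbar x)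
    (hsuper : ∀ x ∈ Sset, ψ x ≤ v x ∨ lscEnv (Mop C v) Sbar x ≤ v x)
    (hu0 : u (0, 0) ≤ v (0, 0)) (hB : ∀ x ∈ Sbar, u x ≤ v (0, 0)) {x : ℝ × ℝ} (hx : x ∈ Sbar) :
    u x ≤ v x := by
  have hlim : Tendsto (fun ε : ℝ => ε * (x.1 + x.2)) (𝓝[>] 0) (𝓝 0) :=
    tendsto_nhdsWithin_of_tendsto_nhds
      (by simpa using (continuous_mul_const (x.1 + x.2)).tendsto (0 : ℝ))
  have := ge_of_tendsto hlim (eventually_nhdsWithin_of_forall fun ε hε =>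
    sub_le_mul_fst_add_snd hC hu hv hsub hsuper hu0 hB hε hx)
  linarith

end Comparison

theorem terminal_comparison_Tk_general
    (C : ℝ → ℝ) (hC : IsCostFn C)
    (K k : ℕ)
    (w G : ℕ → ℝ)
    (f : ℝ × ℝ → ℝ)
    (u v : ℝ × ℝ → ℝ)
    (hu_usc : UpperSemicontinuousOn u Sbar)
    (hv_lsc : LowerSemicontinuousOn v Sbar)
    (hu_sub : ∀ x ∈ Sset,
      u x ≤ sInf {y | ∃ θ : ℝ, 0 ≤ θ ∧ θ ≤ x.1 ∧
        y = w k * max (G k - θ) 0 + f (x.1 - θ, x.2)} ∧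
      (u x : EReal) ≤ uscEnv (Mop C u) Sbar x)
    (hv_super : ∀ x ∈ Sset,
      sInf {y | ∃ θ : ℝ, 0 ≤ θ ∧ θ ≤ x.1 ∧
        y = w k * max (G k - θ) 0 + f (x.1 - θ, x.2)} ≤ v x ∨
      lscEnv (Mop C v) Sbar x ≤ (v x : EReal))
    (hu0 : u (0, 0) ≤ v (0, 0))
    (hv0 : v (0, 0) = ∑ i ∈ Finset.Icc k K, w i * G i)
    (hu_bd : ∀ x ∈ Sbar, 0 ≤ u x ∧ u x ≤ ∑ i ∈ Finset.Icc k K, w i * G i) :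
    ∀ x ∈ Sbar, u x ≤ v x :=
  fun _ hx => comparison_principle hC hu_usc hv_lsc hu_sub hv_super hu0
    (fun z hz => hv0 ▸ (hu_bd z hz).2) hx

/-- (Proposition: terminal comparison at an intermediate deadline `T_k`.) -/
theorem terminal_comparison_Tk
    (C : ℝ → ℝ) (hC : IsCostFn C)
    (K k : ℕ) (hK : 2 ≤ K) (hk1 : 1 ≤ k) (hkK : k ≤ K - 1)
    (w G : ℕ → ℝ)
    (hw : ∀ i, k ≤ i → i ≤ K → 0 < w i) (hG : ∀ i, k ≤ i → i ≤ K → 0 < G i)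
    (p₀ c : ℝ) (hp₀ : 0 < p₀) (hp₁ : p₀ < 1) (hc : 0 < c)
    (f : ℝ × ℝ → ℝ) (hf_cont : ContinuousOn f Sbar)
    (hf_bdd : ∃ M : ℝ, ∀ x ∈ Sbar, |f x| ≤ M)
    (u v : ℝ × ℝ → ℝ)
    (hu_usc : UpperSemicontinuousOn u Sbar)
    (hv_lsc : LowerSemicontinuousOn v Sbar)
    (hu_sub : ∀ x ∈ Sset,
      u x ≤ sInf {y | ∃ θ : ℝ, 0 ≤ θ ∧ θ ≤ x.1 ∧
        y = w k * max (G k - θ) 0 + f (x.1 - θ, x.2)} ∧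
      (u x : EReal) ≤ uscEnv (Mop C u) Sbar x)
    (hv_super : ∀ x ∈ Sset,
      sInf {y | ∃ θ : ℝ, 0 ≤ θ ∧ θ ≤ x.1 ∧
        y = w k * max (G k - θ) 0 + f (x.1 - θ, x.2)} ≤ v x ∨
      lscEnv (Mop C v) Sbar x ≤ (v x : EReal))
    (hu0 : u (0, 0) ≤ v (0, 0))
    (hv0 : v (0, 0) = ∑ i ∈ Finset.Icc k K, w i * G i)
    (hu_bd : ∀ x ∈ Sbar, 0 ≤ u x ∧ u x ≤ ∑ i ∈ Finset.Icc k K, w i * G i)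
    (hv_bd : ∀ x ∈ Sbar,
      -(c * (1 + eunorm x ^ p₀)) ≤ v x ∧ v x ≤ ∑ i ∈ Finset.Icc k K, w i * G i) :
    ∀ x ∈ Sbar, u x ≤ v x :=
  terminal_comparison_Tk_general C hC K k w G f u v hu_usc hv_lsc hu_sub hv_super hu0 hv0 hu_bd
end

section
/- (Lemma, strict classical subsolution: terminal inequality at T_K.) Let w_K > 0, G_K > 0, q ∈ (0,1), a ∈ {0,1}, and let C be a transaction cost function. Then for every x = (x₀, x₁) ∈ 𝒮 (i.e. x₀, x₁ ≥ 0 with (x₀,x₁) ≠ (0,0)): w_K G_K − 2 w_K G_K^{1−q} (a + x₀ + x₁)^q − w_K·[G_K − x₀ − (x₁ − C(−x₁))⁺]⁺ ≤ − w_K · (min(x₀ + x₁, G_K))^q · G_K^{1−q} < 0. -/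
open Set Filter

/-- (Lemma, strict classical subsolution: terminal inequality at `T_K`.) -/
theorem terminal_strict_subsolution_TK
    (C : ℝ → ℝ) (hC : IsCostFn C)
    (wK GK q a : ℝ) (hw : 0 < wK) (hG : 0 < GK)
    (hq0 : 0 < q) (hq1 : q < 1) (ha : a = 0 ∨ a = 1) :
    ∀ x : ℝ × ℝ, x ∈ Sset →
      (wK * GK - 2 * wK * GK ^ (1 - q) * (a + x.1 + x.2) ^ q
          - wK * max (GK - x.1 - max (x.2 - C (-x.2)) 0) 0
        ≤ -(wK * (min (x.1 + x.2) GK) ^ q * GK ^ (1 - q))) ∧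
      -(wK * (min (x.1 + x.2) GK) ^ q * GK ^ (1 - q)) < 0 := by
  intro x hx
  obtain ⟨hxS, hxne⟩ := hx
  have hx0 : (0 : ℝ) ≤ x.1 := hxS.1
  have hx1 : (0 : ℝ) ≤ x.2 := hxS.2
  have ha' : 0 ≤ a := by rcases ha with h | h <;> simp [h]
  have hs : 0 < x.1 + x.2 := by
    rcases lt_or_eq_of_le (add_nonneg hx0 hx1) with h | h
    · exact h
    · exfalso
      apply hxne
      have h1 : x.1 = 0 ∧ x.2 = 0 := (add_eq_zero_iff_of_nonneg hx0 hx1).mp h.symm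
      simp only [Set.mem_singleton_iff]
      exact Prod.ext h1.1 h1.2
  have hGq : 0 < GK ^ (1 - q) := Real.rpow_pos_of_pos hG _
  have hmin : 0 < min (x.1 + x.2) GK := lt_min hs hG
  have hminq : 0 < (min (x.1 + x.2) GK) ^ q := Real.rpow_pos_of_pos hmin _
  refine ⟨?_, by nlinarith [mul_pos (mul_pos hw hminq) hGq]⟩
  have hM0 : 0 ≤ max (GK - x.1 - max (x.2 - C (-x.2)) 0) 0 := le_max_right _ _
  rcases le_or_gt GK (x.1 + x.2) with hge | hlt
  · -- s ≥ G : min = G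
    rw [min_eq_right hge]
    have h1 : GK ^ q * GK ^ (1 - q) = GK := by
      rw [← Real.rpow_add hG]
      norm_num
    have h2 : GK ^ q ≤ (a + x.1 + x.2) ^ q :=
      Real.rpow_le_rpow hG.le (by linarith) hq0.le
    nlinarith [mul_le_mul_of_nonneg_left h2 (le_of_lt (mul_pos hw hGq))]
  · -- s < G : min = s
    rw [min_eq_left hlt.le]
    have hC0 : 0 < C (-x.2) := by
      have := hC.2.1 0 (-x.2) (by rw [abs_zero]; exact abs_nonneg _)
      linarith [hC.2.2.1]
    have hinner : max (x.2 - C (-x.2)) 0 ≤ x.2 := max_le (by linarith) hx1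
    have hM : GK - (x.1 + x.2) ≤ max (GK - x.1 - max (x.2 - C (-x.2)) 0) 0 :=
      le_trans (by linarith) (le_max_left _ _)
    have hsq : 0 ≤ (x.1 + x.2) ^ q := (Real.rpow_pos_of_pos hs _).le
    have hspow : x.1 + x.2 ≤ (x.1 + x.2) ^ q * GK ^ (1 - q) := by
      have h1 : (x.1 + x.2) ^ q * (x.1 + x.2) ^ (1 - q) = x.1 + x.2 := by
        rw [← Real.rpow_add hs]; norm_num
      have h2 : (x.1 + x.2) ^ (1 - q) ≤ GK ^ (1 - q) :=
        Real.rpow_le_rpow hs.le hlt.le (by linarith)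
      nlinarith
    have hA : (x.1 + x.2) ^ q ≤ (a + x.1 + x.2) ^ q :=
      Real.rpow_le_rpow hs.le (by linarith) hq0.le
    nlinarith [mul_le_mul_of_nonneg_left hA (le_of_lt (mul_pos hw hGq)),
      mul_le_mul_of_nonneg_left hspow hw.le,
      mul_le_mul_of_nonneg_left hM hw.le]
end

section
/- (Lemma, strict classical subsolution: intervention inequality.) Let w_K > 0, G_K > 0, q ∈ (0,1), a ∈ {0,1}, and let C be a transaction cost function with C_min := C(0) > 0. Define F(x) := w_K G_K − 2 w_K G_K^{1−q} (a + x₀ + x₁)^q for x ∈ 𝒮̄. Then for every x ∈ 𝒮̄ with D(x) ≠ ∅: F(x) − inf_{Δ ∈ D(x)} F(Γ(x, Δ)) ≤ 2 w_K G_K^{1−q} [ (a + x₀ + x₁ − C_min)^q − (a + x₀ + x₁)^q ] < 0. -/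
open Set Filter

/-- (Lemma, strict classical subsolution: intervention inequality.) -/
theorem intervention_strict_subsolution
    (C : ℝ → ℝ) (hC : IsCostFn C)
    (wK GK q a : ℝ) (hw : 0 < wK) (hG : 0 < GK)
    (hq0 : 0 < q) (hq1 : q < 1) (ha : a = 0 ∨ a = 1)
    (F : ℝ × ℝ → ℝ)
    (hF : ∀ x : ℝ × ℝ, F x = wK * GK - 2 * wK * GK ^ (1 - q) * (a + x.1 + x.2) ^ q) :
    ∀ x ∈ Sbar, (Dset C x).Nonempty →
      (F x - sInf {y | ∃ d ∈ Dset C x, y = F (Gam C x d)}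
        ≤ 2 * wK * GK ^ (1 - q) * ((a + x.1 + x.2 - C 0) ^ q - (a + x.1 + x.2) ^ q)) ∧
      2 * wK * GK ^ (1 - q) * ((a + x.1 + x.2 - C 0) ^ q - (a + x.1 + x.2) ^ q) < 0 := by
  rintro x hx ⟨d₀, hd₀⟩
  obtain ⟨-, hmono, hC0, -, -⟩ := hC
  set s := a + x.1 + x.2 with hs
  have hCd : ∀ d : ℝ, C 0 ≤ C d := fun d => hmono 0 d (by simpa using abs_nonneg d)
  have key : ∀ d ∈ Dset C x, 0 ≤ s - C d := by
    intro d hd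
    have h1 : 0 ≤ x.1 - d - C d := hd.1
    have h2 : 0 ≤ x.2 + d := hd.2
    have ha0 : 0 ≤ a := by rcases ha with h | h <;> simp [h]
    simp only [hs]; linarith
  have hsC0 : 0 ≤ s - C 0 := le_trans (key d₀ hd₀) (by linarith [hCd d₀])
  have hK : 0 < 2 * wK * GK ^ (1 - q) := by positivity
  have hlt : (s - C 0) ^ q < s ^ q :=
    Real.rpow_lt_rpow hsC0 (by linarith) hq0
  constructor
  · have hlow : ∀ y ∈ {y | ∃ d ∈ Dset C x, y = F (Gam C x d)},
        F x - 2 * wK * GK ^ (1 - q) * ((s - C 0) ^ q - s ^ q) ≤ y := by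
      rintro y ⟨d, hd, rfl⟩
      have hiq : a + (Gam C x d).1 + (Gam C x d).2 = s - C d := by
        simp only [Gam, hs]; ring
      rw [hF x, hF (Gam C x d), hiq]
      have hle : (s - C d) ^ q ≤ (s - C 0) ^ q :=
        Real.rpow_le_rpow (key d hd) (by linarith [hCd d]) hq0.le
      nlinarith [hK]
    have hne : {y | ∃ d ∈ Dset C x, y = F (Gam C x d)}.Nonempty :=
      ⟨F (Gam C x d₀), d₀, hd₀, rfl⟩
    have := le_csInf hne hlow
    linarith
  · exact mul_neg_of_pos_of_neg hK (by linarith)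
end

section
/- (Lemma, strict classical subsolution: generator inequality.) Let r, μ ∈ ℝ, σ ∈ ℝ, q ∈ (0,1), λ > q·max{r, μ, 0}, a ∈ {0,1}, S ∈ ℝ, B > 0 and T' ∈ ℝ. Define F(t, x₀, x₁) := S − B·e^{λ(T'−t)}·(a + x₀ + x₁)^q. Then for every t ∈ ℝ and every x = (x₀,x₁) ∈ 𝒮̄ with a + x₀ + x₁ > 0, the classical partial derivatives of F exist at (t,x) and 𝓛[F](t,x) = B e^{λ(T'−t)} (a + x₀ + x₁)^q · [ −λ + q r x₀/(a+x₀+x₁) + q μ x₁/(a+x₀+x₁) + q(q−1) σ² x₁² / (2 (a+x₀+x₁)²) ] ≤ B e^{λ(T'−t)} (a + x₀ + x₁)^q · ( −λ + q·max{r, μ, 0} ) < 0. -/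
open Set Filter Topology

/-- The (negative of the) infinitesimal generator `𝓛[φ](t,x)` of the portfolio dynamics,
written in terms of classical partial derivatives of the (curried) function `φ`. -/
noncomputable def gen (r μ σ : ℝ) (φ : ℝ → ℝ → ℝ → ℝ) (t x₀ x₁ : ℝ) : ℝ :=
  -(deriv (fun s => φ s x₀ x₁) t)
    - r * x₀ * deriv (fun y => φ t y x₁) x₀
    - μ * x₁ * deriv (fun y => φ t x₀ y) x₁
    - σ ^ 2 / 2 * x₁ ^ 2 * deriv (deriv (fun y => φ t x₀ y)) x₁

/-! With `c = a + x₀ + x₁`, the power `c ^ q` is concave in `x₁`, so the diffusion term of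
`𝓛[F]` carries the sign of `q (q - 1) ≤ 0`, while the drift terms `q r x₀ / c + q μ x₁ / c` form a
sub-convex combination of `q r` and `q μ` (as `a ≥ 0`), hence are at most `q · max {r, μ, 0}`.
The time derivative contributes `-λ` times the positive factor `B e^{λ (T' - t)} c ^ q`, and
`λ > q · max {r, μ, 0}` makes the total negative. -/

lemma gen_eq_of_hasDerivAt {r μ σ : ℝ} {φ : ℝ → ℝ → ℝ → ℝ} {t x₀ x₁ φt φ₀ φ₁ φ₁₁ : ℝ}
    (ht : HasDerivAt (fun s => φ s x₀ x₁) φt t)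
    (h₀ : HasDerivAt (fun y => φ t y x₁) φ₀ x₀)
    (h₁ : HasDerivAt (fun y => φ t x₀ y) φ₁ x₁)
    (h₁₁ : HasDerivAt (deriv fun y => φ t x₀ y) φ₁₁ x₁) :
    gen r μ σ φ t x₀ x₁ = -φt - r * x₀ * φ₀ - μ * x₁ * φ₁ - σ ^ 2 / 2 * x₁ ^ 2 * φ₁₁ := by
  rw [gen, ht.deriv, h₀.deriv, h₁.deriv, h₁₁.deriv]

lemma hasDerivAt_const_sub_mul_exp_mul_sub (S K lam T' c t : ℝ) :
    HasDerivAt (fun s => S - K * Real.exp (lam * (T' - s)) * c)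
      (lam * (K * Real.exp (lam * (T' - t)) * c)) t := by
  have hinner : HasDerivAt (fun s => lam * (T' - s)) (lam * (-1)) t :=
    ((hasDerivAt_id t).const_sub T').const_mul lam
  exact (((hinner.exp.const_mul K).mul_const c).const_sub S).congr_deriv (by ring)

section PowerOfTranslate

variable {S K b q y : ℝ}

lemma hasDerivAt_const_sub_mul_rpow_add (hy : b + y ≠ 0) :
    HasDerivAt (fun z => S - K * (b + z) ^ q) (-(K * q) * (b + y) ^ (q - 1)) y := by
  have hinner : HasDerivAt (fun z => b + z) 1 y := (hasDerivAt_id y).const_add b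
  exact (((hinner.rpow_const (Or.inl hy)).const_mul K).const_sub S).congr_deriv (by ring)

lemma hasDerivAt_deriv_const_sub_mul_rpow_add (hy : b + y ≠ 0) :
    HasDerivAt (deriv fun z => S - K * (b + z) ^ q)
      (-(K * q) * ((q - 1) * (b + y) ^ (q - 1 - 1))) y := by
  have hinner : HasDerivAt (fun z => b + z) 1 y := (hasDerivAt_id y).const_add b
  have hderiv : (deriv fun z => S - K * (b + z) ^ q) =ᶠ[𝓝 y]
      fun z => -(K * q) * (b + z) ^ (q - 1) :=
    (hinner.continuousAt.eventually_ne hy).mono fun z hz =>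
      (hasDerivAt_const_sub_mul_rpow_add hz).deriv
  refine HasDerivAt.congr_of_eventuallyEq ?_ hderiv
  exact ((hinner.rpow_const (Or.inl hy)).const_mul (-(K * q))).congr_deriv (by ring)

end PowerOfTranslate

lemma div_add_div_le_max {r μ a x₀ x₁ : ℝ} (ha : 0 ≤ a) (hx₀ : 0 ≤ x₀) (hx₁ : 0 ≤ x₁)
    (hc : 0 < a + x₀ + x₁) :
    r * x₀ / (a + x₀ + x₁) + μ * x₁ / (a + x₀ + x₁) ≤ max r (max μ 0) := by
  rw [← add_div, div_le_iff₀ hc]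
  have hr : r * x₀ ≤ max r (max μ 0) * x₀ := mul_le_mul_of_nonneg_right (le_max_left _ _) hx₀
  have hμ : μ * x₁ ≤ max r (max μ 0) * x₁ :=
    mul_le_mul_of_nonneg_right (le_max_of_le_right (le_max_left _ _)) hx₁
  have h0 : 0 ≤ max r (max μ 0) * a :=
    mul_nonneg (le_max_of_le_right (le_max_right _ _)) ha
  linarith

lemma generator_bracket_le {r μ σ q lam a x₀ x₁ : ℝ} (hq0 : 0 ≤ q) (hq1 : q ≤ 1) (ha : 0 ≤ a)
    (hx₀ : 0 ≤ x₀) (hx₁ : 0 ≤ x₁) (hc : 0 < a + x₀ + x₁) :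
    -lam + q * r * x₀ / (a + x₀ + x₁) + q * μ * x₁ / (a + x₀ + x₁)
        + q * (q - 1) * σ ^ 2 * x₁ ^ 2 / (2 * (a + x₀ + x₁) ^ 2)
      ≤ -lam + q * max r (max μ 0) := by
  have hdrift : q * r * x₀ / (a + x₀ + x₁) + q * μ * x₁ / (a + x₀ + x₁)
      ≤ q * max r (max μ 0) := by
    rw [show q * r * x₀ / (a + x₀ + x₁) + q * μ * x₁ / (a + x₀ + x₁)
        = q * (r * x₀ / (a + x₀ + x₁) + μ * x₁ / (a + x₀ + x₁)) by ring]
    exact mul_le_mul_of_nonneg_left (div_add_div_le_max ha hx₀ hx₁ hc) hq0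
  have hdiffusion : q * (q - 1) * σ ^ 2 * x₁ ^ 2 / (2 * (a + x₀ + x₁) ^ 2) ≤ 0 := by
    refine div_nonpos_of_nonpos_of_nonneg ?_ (by positivity)
    have hconcave : q * (q - 1) ≤ 0 := mul_nonpos_of_nonneg_of_nonpos hq0 (by linarith)
    exact mul_nonpos_of_nonpos_of_nonneg
      (mul_nonpos_of_nonpos_of_nonneg hconcave (sq_nonneg σ)) (sq_nonneg x₁)
  linarith

/-- (Lemma, strict classical subsolution: generator inequality.) -/
theorem generator_strict_subsolution
    (r μ σ q lam a S B T' : ℝ)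
    (hq0 : 0 < q) (hq1 : q < 1) (hlam : q * max r (max μ 0) < lam)
    (ha : a = 0 ∨ a = 1) (hB : 0 < B)
    (F : ℝ → ℝ → ℝ → ℝ)
    (hF : ∀ t x₀ x₁ : ℝ, F t x₀ x₁ = S - B * Real.exp (lam * (T' - t)) * (a + x₀ + x₁) ^ q) :
    ∀ t x₀ x₁ : ℝ, 0 ≤ x₀ → 0 ≤ x₁ → 0 < a + x₀ + x₁ →
      DifferentiableAt ℝ (fun s => F s x₀ x₁) t ∧
      DifferentiableAt ℝ (fun y => F t y x₁) x₀ ∧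
      DifferentiableAt ℝ (fun y => F t x₀ y) x₁ ∧
      DifferentiableAt ℝ (deriv (fun y => F t x₀ y)) x₁ ∧
      gen r μ σ F t x₀ x₁ =
        B * Real.exp (lam * (T' - t)) * (a + x₀ + x₁) ^ q *
          (-lam + q * r * x₀ / (a + x₀ + x₁) + q * μ * x₁ / (a + x₀ + x₁)
            + q * (q - 1) * σ ^ 2 * x₁ ^ 2 / (2 * (a + x₀ + x₁) ^ 2)) ∧
      gen r μ σ F t x₀ x₁ ≤
        B * Real.exp (lam * (T' - t)) * (a + x₀ + x₁) ^ q * (-lam + q * max r (max μ 0)) ∧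
      B * Real.exp (lam * (T' - t)) * (a + x₀ + x₁) ^ q * (-lam + q * max r (max μ 0)) < 0 := by
  intro t x₀ x₁ hx₀ hx₁ hc
  set E := Real.exp (lam * (T' - t))
  set c := a + x₀ + x₁ with hc_def
  have hF₀ : (fun y => F t y x₁) = fun y => S - B * E * (a + x₁ + y) ^ q :=
    funext fun y => by rw [hF, add_right_comm a y]
  have ht : HasDerivAt (fun s => F s x₀ x₁) (lam * (B * E * c ^ q)) t := by
    simp only [hF]
    exact hasDerivAt_const_sub_mul_exp_mul_sub S B lam T' (c ^ q) t
  have h₀ : HasDerivAt (fun y => F t y x₁) (-(B * E * q) * c ^ (q - 1)) x₀ := by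
    rw [hF₀, hc_def, add_right_comm a x₀]
    exact hasDerivAt_const_sub_mul_rpow_add (by rw [add_right_comm]; exact hc.ne')
  have h₁ : HasDerivAt (fun y => F t x₀ y) (-(B * E * q) * c ^ (q - 1)) x₁ := by
    simp only [hF]
    exact hasDerivAt_const_sub_mul_rpow_add hc.ne'
  have h₁₁ : HasDerivAt (deriv fun y => F t x₀ y)
      (-(B * E * q) * ((q - 1) * c ^ (q - 1 - 1))) x₁ := by
    simp only [hF]
    exact hasDerivAt_deriv_const_sub_mul_rpow_add hc.ne'
  have hgen : gen r μ σ F t x₀ x₁ = B * E * c ^ q * (-lam + q * r * x₀ / c + q * μ * x₁ / c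
      + q * (q - 1) * σ ^ 2 * x₁ ^ 2 / (2 * c ^ 2)) := by
    rw [gen_eq_of_hasDerivAt ht h₀ h₁ h₁₁]
    simp only [Real.rpow_sub_one hc.ne']
    field_simp
    ring
  have hfactor : 0 < B * E * c ^ q := by positivity
  have ha0 : 0 ≤ a := by rcases ha with rfl | rfl <;> norm_num
  refine ⟨ht.differentiableAt, h₀.differentiableAt, h₁.differentiableAt,
    h₁₁.differentiableAt, hgen, ?_, mul_neg_of_pos_of_neg hfactor (by linarith)⟩
  rw [hgen]
  exact mul_le_mul_of_nonneg_left (generator_bracket_le hq0.le hq1.le ha0 hx₀ hx₁ hc) hfactor.le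
end

section
/- (Lemma, strict classical subsolution: inequality at an intermediate deadline T_k.) Let K ≥ 2 and 1 ≤ k ≤ K−1 be integers, let T_k < T_{k+1} < ⋯ < T_K be reals, let w_i > 0 and G_i > 0 for i = k,…,K, let r, μ ∈ ℝ, q ∈ (0,1), λ > q·max{r, μ, 0}, and a ∈ {0,1}. Set C_j := Σ_{i=j}^K 2 w_i G_i^{1−q} e^{λ(T_i − T_j)} for j ∈ {k, k+1}, and define F_j(x) := Σ_{i=j}^K w_i G_i − C_j (a + x₀ + x₁)^q · e^{λ(T_j − T_k)} evaluated at time T_k, i.e. F_k(x) := Σ_{i=k}^K w_i G_i − C_k (a + x₀ + x₁)^q and F_{k+1}(x) := Σ_{i=k+1}^K w_i G_i − C_{k+1} (a + x₀ + x₁)^q e^{λ(T_{k+1} − T_k)}. Then for every x = (x₀,x₁) ∈ 𝒮: F_k(x) − inf_{0 ≤ θ ≤ x₀} [ w_k (G_k − θ)⁺ + F_{k+1}(x₀ − θ, x₁) ] ≤ − w_k G_k^{1−q} · (min(x₀ + x₁, G_k))^q < 0. -/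
open Set Filter

/-- (Lemma, strict classical subsolution: inequality at an intermediate deadline `T_k`.) -/
theorem deadline_strict_subsolution_Tk
    (K k : ℕ) (hK : 2 ≤ K) (hk1 : 1 ≤ k) (hkK : k ≤ K - 1)
    (T : ℕ → ℝ) (hT : ∀ i, k ≤ i → i < K → T i < T (i + 1))
    (w G : ℕ → ℝ)
    (hw : ∀ i, k ≤ i → i ≤ K → 0 < w i) (hG : ∀ i, k ≤ i → i ≤ K → 0 < G i)
    (r μ q lam a : ℝ)
    (hq0 : 0 < q) (hq1 : q < 1) (hlam : q * max r (max μ 0) < lam)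
    (ha : a = 0 ∨ a = 1)
    (Ck Ck1 : ℝ)
    (hCk : Ck = ∑ i ∈ Finset.Icc k K, 2 * w i * G i ^ (1 - q) * Real.exp (lam * (T i - T k)))
    (hCk1 : Ck1 = ∑ i ∈ Finset.Icc (k + 1) K,
      2 * w i * G i ^ (1 - q) * Real.exp (lam * (T i - T (k + 1))))
    (Fk Fk1 : ℝ × ℝ → ℝ)
    (hFk : ∀ x : ℝ × ℝ,
      Fk x = (∑ i ∈ Finset.Icc k K, w i * G i) - Ck * (a + x.1 + x.2) ^ q)
    (hFk1 : ∀ x : ℝ × ℝ,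
      Fk1 x = (∑ i ∈ Finset.Icc (k + 1) K, w i * G i)
        - Ck1 * (a + x.1 + x.2) ^ q * Real.exp (lam * (T (k + 1) - T k))) :
    ∀ x ∈ Sset,
      (Fk x - sInf {y | ∃ θ : ℝ, 0 ≤ θ ∧ θ ≤ x.1 ∧
          y = w k * max (G k - θ) 0 + Fk1 (x.1 - θ, x.2)}
        ≤ -(w k * G k ^ (1 - q) * (min (x.1 + x.2) (G k)) ^ q)) ∧
      -(w k * G k ^ (1 - q) * (min (x.1 + x.2) (G k)) ^ q) < 0 := by
  intro x hx
  obtain ⟨hxS, hxne⟩ := hx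
  obtain ⟨hx1, hx2⟩ := hxS
  simp only [Set.mem_Ici] at hx1 hx2
  have hkK' : k + 1 ≤ K := by omega
  have hkK'' : k ≤ K := by omega
  have ha0 : 0 ≤ a := by rcases ha with h | h <;> simp [h]
  have hGk : 0 < G k := hG k le_rfl hkK''
  have hwk : 0 < w k := hw k le_rfl hkK''
  have hs : 0 < x.1 + x.2 := by
    rcases lt_or_eq_of_le hx1 with h | h
    · linarith
    · rcases lt_or_eq_of_le hx2 with h2 | h2
      · linarith
      · exfalso; apply hxne; simp only [Set.mem_singleton_iff, Prod.ext_iff]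
        exact ⟨h.symm, h2.symm⟩
  set m : ℝ := min (x.1 + x.2) (G k) with hm_def
  have hm : 0 < m := lt_min hs hGk
  set E : ℝ := Real.exp (lam * (T (k + 1) - T k)) with hE_def
  have hE : 0 < E := Real.exp_pos _
  have hCk1nn : 0 ≤ Ck1 := by
    rw [hCk1]
    apply Finset.sum_nonneg
    intro i hi
    simp only [Finset.mem_Icc] at hi
    have hwi := hw i (by omega) hi.2
    have hGi := hG i (by omega) hi.2
    positivity
  -- Split Ck
  have hIcc : Finset.Icc k K = (Finset.Ioc k K).cons k (by simp) :=
    Finset.Icc_eq_cons_Ioc hkK''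
  have hIoc : Finset.Icc (k + 1) K = Finset.Ioc k K := Finset.Icc_add_one_left_eq_Ioc k K
  have hCsplit : Ck = 2 * w k * G k ^ (1 - q) + Ck1 * E := by
    rw [hCk, hIcc, Finset.sum_cons, sub_self, mul_zero, Real.exp_zero, mul_one, hCk1, hIoc,
      Finset.sum_mul]
    congr 1
    apply Finset.sum_congr rfl
    intro i hi
    have hexp : Real.exp (lam * (T i - T k))
        = Real.exp (lam * (T i - T (k + 1))) * E := by
      rw [hE_def, ← Real.exp_add]
      congr 1
      ring
    rw [hexp]
    ring
  have hSsplit : ∑ i ∈ Finset.Icc k K, w i * G i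
      = w k * G k + ∑ i ∈ Finset.Icc (k + 1) K, w i * G i := by
    rw [hIcc, Finset.sum_cons, hIoc]
  -- positivity of the strict bound
  have hpos : 0 < w k * G k ^ (1 - q) * m ^ q := by positivity
  refine ⟨?_, by linarith⟩
  -- key pointwise bound
  have key : ∀ θ : ℝ, 0 ≤ θ → θ ≤ x.1 →
      Fk x + w k * G k ^ (1 - q) * m ^ q
        ≤ w k * max (G k - θ) 0 + Fk1 (x.1 - θ, x.2) := by
    intro θ hθ0 hθ1
    rw [hFk, hFk1]
    simp only
    have hbase : a + (x.1 - θ) + x.2 = a + x.1 + x.2 - θ := by ring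
    rw [hbase, hSsplit, hCsplit]
    set P : ℝ := (a + x.1 + x.2) ^ q with hP_def
    set Pt : ℝ := (a + x.1 + x.2 - θ) ^ q with hPt_def
    have hPnn : 0 ≤ P := Real.rpow_nonneg (by linarith) q
    have hmono : Pt ≤ P :=
      Real.rpow_le_rpow (by linarith) (by linarith) hq0.le
    have h2 : Ck1 * Pt * E ≤ Ck1 * E * P := by
      have := mul_le_mul_of_nonneg_left hmono (mul_nonneg hCk1nn hE.le)
      nlinarith
    -- m ≤ G k ^ (1-q) * P
    have hmA : m ≤ G k ^ (1 - q) * P := by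
      have h1 : m = m ^ (1 - q) * m ^ q := by
        rw [← Real.rpow_add hm, sub_add_cancel, Real.rpow_one]
      rw [h1]
      apply mul_le_mul
      · exact Real.rpow_le_rpow hm.le (min_le_right _ _) (by linarith)
      · refine Real.rpow_le_rpow hm.le ?_ hq0.le
        have hmle : m ≤ x.1 + x.2 := min_le_left _ _
        linarith
      · exact Real.rpow_nonneg hm.le q
      · exact Real.rpow_nonneg (by positivity) _
    -- G k - max (G k - θ) 0 ≤ m hence bound on max
    have hminm : min (G k) θ ≤ G k ^ (1 - q) * P := by
      refine le_trans (le_trans (le_min ?_ ?_) hmA) le_rfl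
      · exact le_trans (min_le_right _ _) (by linarith)
      · exact min_le_left _ _
    have hmax : G k - G k ^ (1 - q) * P ≤ max (G k - θ) 0 := by
      rcases le_total θ (G k) with h | h
      · have hmr : min (G k) θ = θ := min_eq_right h
        calc G k - G k ^ (1 - q) * P ≤ G k - θ := by linarith
          _ ≤ max (G k - θ) 0 := le_max_left _ _
      · have hml : min (G k) θ = G k := min_eq_left h
        exact le_trans (by linarith) (le_max_right _ _)
    have h1 : w k * G k - w k * (G k ^ (1 - q) * P) ≤ w k * max (G k - θ) 0 := by
      have := mul_le_mul_of_nonneg_left hmax hwk.le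
      nlinarith
    have h3 : w k * G k ^ (1 - q) * m ^ q ≤ w k * (G k ^ (1 - q) * P) := by
      have hmq : m ^ q ≤ P :=
        Real.rpow_le_rpow hm.le (le_trans (min_le_left _ _) (by linarith)) hq0.le
      rw [mul_assoc]
      exact mul_le_mul_of_nonneg_left
        (mul_le_mul_of_nonneg_left hmq (Real.rpow_nonneg hGk.le _)) hwk.le
    have hexp : (2 * w k * G k ^ (1 - q) + Ck1 * E) * P
        = 2 * (w k * (G k ^ (1 - q) * P)) + Ck1 * E * P := by ring
    linarith [h1, h2, h3, hexp]
  -- now use sInf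
  have hne : {y | ∃ θ : ℝ, 0 ≤ θ ∧ θ ≤ x.1 ∧
      y = w k * max (G k - θ) 0 + Fk1 (x.1 - θ, x.2)}.Nonempty :=
    ⟨_, 0, le_rfl, hx1, rfl⟩
  have hlb : Fk x + w k * G k ^ (1 - q) * m ^ q ≤ sInf {y | ∃ θ : ℝ, 0 ≤ θ ∧ θ ≤ x.1 ∧
      y = w k * max (G k - θ) 0 + Fk1 (x.1 - θ, x.2)} := by
    apply le_csInf hne
    rintro b ⟨θ, hθ0, hθ1, rfl⟩
    exact key θ hθ0 hθ1
  linarith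
end

section
/- (Lemma on the intervention operator, part 1.) Let C be a transaction cost function, let a ≤ b be reals, and let f : [a,b] × 𝒮̄ → ℝ be lower semicontinuous. Then the ℝ ∪ {+∞}-valued function M[f] is lower semicontinuous on [a,b] × 𝒮̄; equivalently, M[f]_*(t,x) = M[f](t,x) for all (t,x) ∈ [a,b] × 𝒮̄. -/
open Set Filter
open Topology

/-- The intervention operator on time-dependent functions,
with value `+∞` if no transaction is feasible. -/
noncomputable def MopT (C : ℝ → ℝ) (f : ℝ × (ℝ × ℝ) → ℝ) (p : ℝ × (ℝ × ℝ)) : EReal :=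
  ⨅ d ∈ Dset C p.2, ((f (p.1, Gam C p.2 d) : ℝ) : EReal)

/-!
Berge's maximum theorem, lower half: an infimum `q ↦ ⨅ d ∈ D q, F (q, d)` of a lower
semicontinuous function over a correspondence `D` with closed graph and locally compact
range is lower semicontinuous. If `M p > y`, pick `y < y' < M p`; every `d` has a product
neighbourhood of `(p, d)` on which either `d ∉ D q` (closed graph) or `F > y'` (lower
semicontinuity), and the tube lemma over the compact set containing the nearby `D q`
gives `M q ≥ y' > y` for all `q` near `p`. The feasible sets of the rebalancing problem
satisfy these hypotheses because `Γ` is continuous and `-x₁ ≤ Δ ≤ x₀` on `D(x)`.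
-/

theorem lowerSemicontinuousOn_iInf_of_isClosed_graph {X Y β : Type*} [TopologicalSpace X]
    [TopologicalSpace Y] [CompleteLinearOrder β] [DenselyOrdered β]
    {S : Set X} {D : X → Set Y} {F : X × Y → β}
    (hD : IsClosed {z : X × Y | z.2 ∈ D z.1})
    (hbdd : ∀ p ∈ S, ∃ K, IsCompact K ∧ ∀ᶠ q in 𝓝[S] p, D q ⊆ K)
    (hF : LowerSemicontinuousOn F {z | z.1 ∈ S ∧ z.2 ∈ D z.1}) :
    LowerSemicontinuousOn (fun q => ⨅ d ∈ D q, F (q, d)) S := by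
  intro p hp y hy
  obtain ⟨y', hyy', hy'⟩ := exists_between hy
  obtain ⟨K, hK, hDK⟩ := hbdd p hp
  have tube : ∀ᶠ q in 𝓝 p, ∀ d ∈ K, q ∈ S → d ∈ D q → y' < F (q, d) := by
    refine hK.eventually_forall_of_forall_eventually fun d _ => ?_
    by_cases hd : d ∈ D p
    · have hFd := hF (p, d) ⟨hp, hd⟩ y' (hy'.trans_le (iInf₂_le d hd))
      rw [eventually_nhdsWithin_iff] at hFd
      exact hFd.mono fun z hz hzS hzD => hz ⟨hzS, hzD⟩
    · exact eventually_of_mem (hD.isOpen_compl.mem_nhds hd) fun z hz _ hzD => (hz hzD).elim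
  filter_upwards [hDK, nhdsWithin_le_nhds tube, self_mem_nhdsWithin] with q hqK hq hqS
  exact hyy'.trans_le (le_iInf₂ fun d hd => (hq d (hqK hd) hqS hd).le)

theorem lscEnv_eq_of_lowerSemicontinuousWithinAt {α : Type*} [TopologicalSpace α]
    {h : α → EReal} {E : Set α} {z : α} (hh : LowerSemicontinuousWithinAt h E z) (hz : z ∈ E) :
    lscEnv h E z = h z :=
  have hfreq : ∃ᶠ q in 𝓝[E] z, h q ≤ h z :=
    ((frequently_pure (a := z) (p := fun q => h q ≤ h z)).2 le_rfl).filter_mono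
      (pure_le_nhdsWithin hz)
  le_antisymm (liminf_le_of_frequently_le' hfreq) hh.le_liminf

theorem continuous_Gam {C : ℝ → ℝ} (hC : Continuous C) : Continuous (Function.uncurry (Gam C)) := by
  unfold Gam Function.uncurry
  fun_prop

theorem IsCostFn.pos {C : ℝ → ℝ} (hC : IsCostFn C) (d : ℝ) : 0 < C d :=
  hC.2.2.1.trans_le (hC.2.1 0 d (by simp))

theorem Dset_subset_Icc {C : ℝ → ℝ} (hC : IsCostFn C) (x : ℝ × ℝ) :
    Dset C x ⊆ Icc (-x.2) x.1 := by
  rintro d ⟨h₁, h₂⟩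
  simp only [Gam, mem_Ici] at h₁ h₂
  have := hC.pos d
  constructor <;> linarith

theorem eventually_Dset_subset_Icc {C : ℝ → ℝ} (hC : IsCostFn C) (x : ℝ × ℝ) :
    ∀ᶠ y in 𝓝 x, Dset C y ⊆ Icc (-(x.2 + 1)) (x.1 + 1) := by
  filter_upwards [(continuous_fst.tendsto x).eventually_lt_const (lt_add_one x.1),
    (continuous_snd.tendsto x).eventually_lt_const (lt_add_one x.2)] with y h₁ h₂
  exact (Dset_subset_Icc hC y).trans (Icc_subset_Icc (by linarith) h₁.le)

theorem intervention_lsc_general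
    (C : ℝ → ℝ) (hC : IsCostFn C)
    (a b : ℝ)
    (f : ℝ × (ℝ × ℝ) → ℝ)
    (hf : LowerSemicontinuousOn f (Set.Icc a b ×ˢ Sbar)) :
    LowerSemicontinuousOn (MopT C f) (Set.Icc a b ×ˢ Sbar) ∧
    ∀ p ∈ Set.Icc a b ×ˢ Sbar,
      lscEnv (MopT C f) (Set.Icc a b ×ˢ Sbar) p = MopT C f p := by
  have hGam : Continuous fun z : (ℝ × (ℝ × ℝ)) × ℝ => (z.1.1, Gam C z.1.2 z.2) :=
    continuous_fst.fst.prodMk ((continuous_Gam hC.1).comp (continuous_fst.snd.prodMk continuous_snd))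
  have hF : LowerSemicontinuousOn (fun z : (ℝ × (ℝ × ℝ)) × ℝ => f (z.1.1, Gam C z.1.2 z.2))
      {z | z.1 ∈ Icc a b ×ˢ Sbar ∧ z.2 ∈ Dset C z.1.2} :=
    hf.comp hGam.continuousOn fun z hz => ⟨hz.1.1, hz.2⟩
  have hM : LowerSemicontinuousOn (MopT C f) (Icc a b ×ˢ Sbar) :=
    lowerSemicontinuousOn_iInf_of_isClosed_graph (S := Icc a b ×ˢ Sbar) (D := fun p => Dset C p.2)
      (F := fun z => ((f (z.1.1, Gam C z.1.2 z.2) : ℝ) : EReal))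
      (isClosed_Sbar.preimage (continuous_snd.comp hGam))
      (fun p _ => ⟨_, isCompact_Icc, nhdsWithin_le_nhds
        ((continuous_snd.tendsto p).eventually (eventually_Dset_subset_Icc hC p.2))⟩)
      (continuous_coe_real_ereal.comp_lowerSemicontinuousOn hF EReal.coe_strictMono.monotone)
  exact ⟨hM, fun p hp => lscEnv_eq_of_lowerSemicontinuousWithinAt (hM p hp) hp⟩

/-- (Lemma on the intervention operator, part 1: `M[f]` is lower semicontinuous
for lower semicontinuous `f`, equivalently `M[f]_* = M[f]` on the domain.) -/
theorem intervention_lsc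
    (C : ℝ → ℝ) (hC : IsCostFn C)
    (a b : ℝ) (hab : a ≤ b)
    (f : ℝ × (ℝ × ℝ) → ℝ)
    (hf : LowerSemicontinuousOn f (Set.Icc a b ×ˢ Sbar)) :
    LowerSemicontinuousOn (MopT C f) (Set.Icc a b ×ˢ Sbar) ∧
    ∀ p ∈ Set.Icc a b ×ˢ Sbar,
      lscEnv (MopT C f) (Set.Icc a b ×ˢ Sbar) p = MopT C f p :=
  intervention_lsc_general C hC a b f hf
end

section
/- (Lemma on the intervention operator, part 2.) Let C be a transaction cost function, let a ≤ b be reals, and let f : [a,b] × 𝒮̄ → ℝ be upper semicontinuous and locally bounded. Then M[f]^*(t,x) = M[f](t,x) for all (t,x) ∈ [a,b] × (𝒮̄ ∖ cl(𝒮_∅)), where cl(𝒮_∅) denotes the closure of 𝒮_∅ in 𝒮̄; in particular, M[f] is real-valued and upper semicontinuous at every such point. -/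
open Set Filter

/-- Positions with no feasible transactions. -/
def Sempty (C : ℝ → ℝ) : Set (ℝ × ℝ) := {x | x ∈ Sbar ∧ Dset C x = ∅}

lemma mem_Dset_iff (C : ℝ → ℝ) (x : ℝ × ℝ) (d : ℝ) :
    d ∈ Dset C x ↔ d + C d ≤ x.1 ∧ 0 ≤ x.2 + d := by
  simp only [Dset, Gam, Sbar, Set.mem_setOf_eq, Set.mem_prod, Set.mem_Ici]
  constructor <;> rintro ⟨h1, h2⟩ <;> exact ⟨by linarith, by linarith⟩

lemma bound_on_compact {E K : Set (ℝ × (ℝ × ℝ))} (f : ℝ × (ℝ × ℝ) → ℝ)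
    (hK : IsCompact K) (hKE : K ⊆ E)
    (hloc : ∀ p ∈ E, ∃ ε > (0:ℝ), ∃ M : ℝ, ∀ p' ∈ E, dist p' p < ε → |f p'| ≤ M) :
    ∃ M : ℝ, ∀ q ∈ K, |f q| ≤ M := by
  have h2 : ∀ q ∈ K, ∃ ε > (0:ℝ), ∃ M : ℝ, ∀ p' ∈ E, dist p' q < ε → |f p'| ≤ M :=
    fun q hq => hloc q (hKE hq)
  choose! ε hε M hM using h2
  obtain ⟨t, htK, hcov⟩ := hK.elim_nhds_subcover (fun q => Metric.ball q (ε q))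
    (fun q hq => Metric.ball_mem_nhds q (hε q hq))
  obtain ⟨B, hB⟩ := (t.finite_toSet.image M).bddAbove
  refine ⟨B, fun q hq => ?_⟩
  obtain ⟨q₀, hq₀t, hq₀⟩ := Set.mem_iUnion₂.1 (hcov hq)
  exact le_trans (hM q₀ (htK q₀ hq₀t) q (hKE hq) (Metric.mem_ball.1 hq₀))
    (hB (Set.mem_image_of_mem M hq₀t))

lemma MopT_usc_at (C : ℝ → ℝ) (hC : IsCostFn C) (a b : ℝ)
    (f : ℝ × (ℝ × ℝ) → ℝ)
    (hf : UpperSemicontinuousOn f (Set.Icc a b ×ˢ Sbar))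
    (p : ℝ × (ℝ × ℝ)) (hp : p ∈ Set.Icc a b ×ˢ (Sbar \ closure (Sempty C))) :
    UpperSemicontinuousWithinAt (MopT C f) (Set.Icc a b ×ˢ Sbar) p := by
  obtain ⟨hC1, hC2, hC3, hC4, hC5⟩ := hC
  obtain ⟨ht, hx, hxc⟩ : p.1 ∈ Set.Icc a b ∧ p.2 ∈ Sbar ∧ p.2 ∉ closure (Sempty C) :=
    ⟨hp.1, hp.2.1, hp.2.2⟩
  intro y hy
  -- pick a near-optimal transaction d
  obtain ⟨d, hd, hdy⟩ : ∃ d ∈ Dset C p.2, ((f (p.1, Gam C p.2 d) : ℝ) : EReal) < y := by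
    by_contra h
    push_neg at h
    exact (le_iInf₂ h).not_gt hy
  set v := f (p.1, Gam C p.2 d) with hv
  obtain ⟨r, hvr, hry⟩ : ∃ r : ℝ, v < r ∧ ((r : ℝ) : EReal) ≤ y := by
    obtain ⟨r, h1, h2⟩ := EReal.lt_iff_exists_real_btwn.1 hdy
    exact ⟨r, by exact_mod_cast h1, h2.le⟩
  -- upper semicontinuity of f at q₀
  have hq₀E : (p.1, Gam C p.2 d) ∈ Set.Icc a b ×ˢ Sbar := ⟨ht, hd⟩
  have husc := hf _ hq₀E r hvr
  obtain ⟨δ₁, hδ₁, hball₁⟩ := Metric.mem_nhdsWithin_iff.1 husc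
  -- neighborhood avoiding closure of Sempty
  obtain ⟨δ₂, hδ₂, hball₂⟩ :=
    Metric.mem_nhds_iff.1 ((isClosed_closure.isOpen_compl).mem_nhds hxc)
  -- continuity of φ := d ↦ d + C d at d
  have hφc : Continuous (fun z : ℝ => z + C z) := continuous_id.add hC1
  have hφmono : Monotone (fun z : ℝ => z + C z) := hC4.monotone
  obtain ⟨ε₀, hε₀, hε₀φ⟩ := Metric.continuousAt_iff.1 hφc.continuousAt (δ₁/4) (by linarith)
  set ε := min (ε₀/2) (δ₁/4) with hεdef
  have hε : 0 < ε := lt_min (by linarith) (by linarith)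
  have hεle : ε ≤ δ₁/4 := min_le_right _ _
  have hεφ : ∀ d'' : ℝ, |d'' - d| ≤ ε → |(d'' + C d'') - (d + C d)| < δ₁/4 := by
    intro d'' h
    have : dist d'' d < ε₀ := by
      rw [Real.dist_eq]
      have := min_le_left (ε₀/2) (δ₁/4)
      linarith
    have := hε₀φ this
    rwa [Real.dist_eq] at this
  -- key constants
  have hdmem := (mem_Dset_iff C p.2 d).1 hd
  set η := p.2.1 - ((d - ε) + C (d - ε)) with hηdef
  have hη : 0 < η := by
    have h1 : (d - ε) + C (d - ε) < d + C d := hC4 (by linarith)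
    have h2 : d + C d ≤ p.2.1 := hdmem.1
    simp only [hηdef]; linarith
  set ρ := min δ₂ (min η (min ε (δ₁/4))) with hρdef
  have hρ : 0 < ρ := lt_min hδ₂ (lt_min hη (lt_min hε (by linarith)))
  have hρδ₂ : ρ ≤ δ₂ := min_le_left _ _
  have hρη : ρ ≤ η := le_trans (min_le_right _ _) (min_le_left _ _)
  have hρε : ρ ≤ ε := le_trans (min_le_right _ _) (le_trans (min_le_right _ _) (min_le_left _ _))
  have hρδ₁ : ρ ≤ δ₁/4 := le_trans (min_le_right _ _) (le_trans (min_le_right _ _) (min_le_right _ _))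
  -- concluding: eventual bound
  apply Metric.mem_nhdsWithin_iff.2
  refine ⟨ρ, hρ, ?_⟩
  rintro p' ⟨hp'ball, hp'E⟩
  have hp'dist : dist p' p < ρ := Metric.mem_ball.1 hp'ball
  rw [Prod.dist_eq, max_lt_iff] at hp'dist
  obtain ⟨hdt, hdx⟩ := hp'dist
  rw [Prod.dist_eq, max_lt_iff, Real.dist_eq, Real.dist_eq] at hdx
  obtain ⟨hdx1, hdx2⟩ := hdx
  have hdx1' := abs_lt.1 hdx1
  have hdx2' := abs_lt.1 hdx2
  -- Dset of p'.2 is nonempty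
  have hx'S : p'.2 ∈ Sbar := hp'E.2
  have hx'ne : p'.2 ∉ Sempty C := by
    intro h
    have hball : p'.2 ∈ Metric.ball p.2 δ₂ := by
      rw [Metric.mem_ball, Prod.dist_eq, Real.dist_eq, Real.dist_eq]
      exact lt_of_lt_of_le (max_lt hdx1 hdx2) hρδ₂
    exact (hball₂ hball) (subset_closure h)
  obtain ⟨d₀, hd₀⟩ : (Dset C p'.2).Nonempty :=
    Set.nonempty_iff_ne_empty.2 (fun he => hx'ne ⟨hx'S, he⟩)
  have hd₀' := (mem_Dset_iff C p'.2 d₀).1 hd₀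
  -- the approximate transaction
  set d' := max (-p'.2.2) (d - ε) with hd'def
  have hd'mem : d' ∈ Dset C p'.2 := by
    rw [mem_Dset_iff]
    constructor
    · rcases le_total (-p'.2.2) (d - ε) with h | h
      · have : d' = d - ε := max_eq_right h
        rw [this]
        have hηe : (d - ε) + C (d - ε) = p.2.1 - η := by rw [hηdef]; ring
        rw [hηe]
        linarith [hdx1'.1]
      · have hd'eq : d' = -p'.2.2 := max_eq_left h
        have h1 : -p'.2.2 ≤ d₀ := by linarith [hd₀'.2]
        have h2 : (-p'.2.2) + C (-p'.2.2) ≤ d₀ + C d₀ := hφmono h1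
        rw [hd'eq]; linarith [hd₀'.1]
    · have : -p'.2.2 ≤ d' := le_max_left _ _
      linarith
  have hd'lb : d - ε ≤ d' := le_max_right _ _
  have hd'ub : d' ≤ d + ε := by
    apply max_le
    · have : 0 ≤ p.2.2 + d := hdmem.2
      linarith [hdx2'.1]
    · linarith
  have hφd' : |(d' + C d') - (d + C d)| < δ₁/4 :=
    hεφ d' (abs_le.2 ⟨by linarith, by linarith⟩)
  have hφd'' := abs_lt.1 hφd'
  -- the evaluation point is close to q₀
  have hq'E : (p'.1, Gam C p'.2 d') ∈ Set.Icc a b ×ˢ Sbar := ⟨hp'E.1, hd'mem⟩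
  have hq'dist : dist (p'.1, Gam C p'.2 d') (p.1, Gam C p.2 d) < δ₁ := by
    rw [Prod.dist_eq, Prod.dist_eq]
    apply max_lt
    · exact lt_of_lt_of_le hdt (by linarith)
    apply max_lt
    · simp only [Gam, Real.dist_eq]
      rw [abs_lt]
      refine ⟨?_, ?_⟩ <;>
        linarith [hdx1'.1, hdx1'.2, hφd''.1, hφd''.2, hρδ₁, hδ₁]
    · simp only [Gam, Real.dist_eq]
      rw [abs_lt]
      refine ⟨?_, ?_⟩ <;>
        linarith [hdx2'.1, hdx2'.2, hρδ₁, hρε, hεle, hδ₁, hd'lb, hd'ub]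
  have hfq' : f (p'.1, Gam C p'.2 d') < r :=
    hball₁ ⟨Metric.mem_ball.2 hq'dist, hq'E⟩
  calc MopT C f p' ≤ ((f (p'.1, Gam C p'.2 d') : ℝ) : EReal) := iInf₂_le d' hd'mem
    _ < ((r : ℝ) : EReal) := by exact_mod_cast hfq'
    _ ≤ y := hry

/-- (Lemma on the intervention operator, part 2: for upper semicontinuous, locally
bounded `f`, `M[f]^* = M[f]` away from the closure of the no-transaction region;
in particular `M[f]` is real-valued and upper semicontinuous at every such point.) -/
theorem intervention_usc_away_from_Sempty
    (C : ℝ → ℝ) (hC : IsCostFn C)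
    (a b : ℝ) (hab : a ≤ b)
    (f : ℝ × (ℝ × ℝ) → ℝ)
    (hf : UpperSemicontinuousOn f (Set.Icc a b ×ˢ Sbar))
    (hloc : ∀ p ∈ Set.Icc a b ×ˢ Sbar, ∃ ε > (0 : ℝ), ∃ M : ℝ,
      ∀ p' ∈ Set.Icc a b ×ˢ Sbar, dist p' p < ε → |f p'| ≤ M) :
    ∀ p ∈ Set.Icc a b ×ˢ (Sbar \ closure (Sempty C)),
      uscEnv (MopT C f) (Set.Icc a b ×ˢ Sbar) p = MopT C f p ∧
      MopT C f p ≠ ⊤ ∧ MopT C f p ≠ ⊥ ∧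
      UpperSemicontinuousWithinAt (MopT C f) (Set.Icc a b ×ˢ Sbar) p := by
  intro p hp
  obtain ⟨hC1, hC2, hC3, hC4, hC5⟩ := hC
  have hpE : p ∈ Set.Icc a b ×ˢ Sbar := ⟨hp.1, hp.2.1⟩
  have husc := MopT_usc_at C ⟨hC1, hC2, hC3, hC4, hC5⟩ a b f hf p hp
  -- Dset nonempty
  have hx'ne : p.2 ∉ Sempty C := fun h => hp.2.2 (subset_closure h)
  obtain ⟨d₀, hd₀⟩ : (Dset C p.2).Nonempty :=
    Set.nonempty_iff_ne_empty.2 (fun he => hx'ne ⟨hp.2.1, he⟩)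
  -- MopT ≠ ⊤
  have hntop : MopT C f p ≠ ⊤ :=
    (lt_of_le_of_lt (iInf₂_le d₀ hd₀) (EReal.coe_lt_top _)).ne
  -- MopT ≠ ⊥ via bound on compact set
  have hnbot : MopT C f p ≠ ⊥ := by
    set B₁ := p.2.1 - ((-p.2.2) + C (-p.2.2)) with hB₁
    set B₂ := p.2.2 + p.2.1 with hB₂
    have hKc : IsCompact ({p.1} ×ˢ (Set.Icc (0:ℝ) B₁ ×ˢ Set.Icc (0:ℝ) B₂)) :=
      isCompact_singleton.prod (isCompact_Icc.prod isCompact_Icc)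
    have hKE : ({p.1} ×ˢ (Set.Icc (0:ℝ) B₁ ×ˢ Set.Icc (0:ℝ) B₂)) ⊆ Set.Icc a b ×ˢ Sbar := by
      rintro ⟨q1, q2⟩ ⟨hq1, hq2⟩
      simp only [Set.mem_singleton_iff] at hq1
      exact ⟨hq1 ▸ hp.1, ⟨hq2.1.1, hq2.2.1⟩⟩
    obtain ⟨M, hM⟩ := bound_on_compact f hKc hKE hloc
    have hbd : ∀ d ∈ Dset C p.2, ((-M : ℝ) : EReal) ≤ ((f (p.1, Gam C p.2 d) : ℝ) : EReal) := by
      intro d hd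
      have hd' := (mem_Dset_iff C p.2 d).1 hd
      have hmem : (p.1, Gam C p.2 d) ∈ ({p.1} ×ˢ (Set.Icc (0:ℝ) B₁ ×ˢ Set.Icc (0:ℝ) B₂)) := by
        refine ⟨rfl, ⟨⟨?_, ?_⟩, ⟨?_, ?_⟩⟩⟩
        · simp only [Gam]; linarith [hd'.1]
        · simp only [Gam]
          have : (-p.2.2) + C (-p.2.2) ≤ d + C d := hC4.monotone (by linarith [hd'.2])
          simp only [hB₁]; linarith
        · simp only [Gam]; linarith [hd'.2]
        · simp only [Gam]
          have hC0d : C 0 ≤ C d := hC2 0 d (by simp [abs_nonneg])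
          simp only [hB₂]; linarith [hd'.1]
      have := hM _ hmem
      have : -M ≤ f (p.1, Gam C p.2 d) := neg_le_of_abs_le this
      exact_mod_cast this
    have : ((-M : ℝ) : EReal) ≤ MopT C f p := le_iInf₂ hbd
    exact fun h => by rw [h] at this; exact (EReal.bot_lt_coe _).not_ge this
  refine ⟨?_, hntop, hnbot, husc⟩
  -- envelope equality
  apply le_antisymm
  · -- limsup ≤ value
    by_contra hlt
    push_neg at hlt
    obtain ⟨c, hc1, hc2⟩ := exists_between hlt
    have hev : ∀ᶠ q in nhdsWithin p (Set.Icc a b ×ˢ Sbar), MopT C f q ≤ c :=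
      (husc c hc1).mono fun _ h => h.le
    have : uscEnv (MopT C f) (Set.Icc a b ×ˢ Sbar) p ≤ c :=
      Filter.limsup_le_of_le (by isBoundedDefault) hev
    exact (lt_irrefl _ (lt_of_le_of_lt this hc2))
  · -- value ≤ limsup
    have hfreq : ∃ᶠ q in nhdsWithin p (Set.Icc a b ×ˢ Sbar), MopT C f p ≤ MopT C f q := by
      apply Frequently.filter_mono _ (pure_le_nhdsWithin hpE)
      exact (Filter.eventually_pure.2 le_rfl).frequently
    exact le_limsup_of_frequently_le' hfreq
end

section
/- (Existence of a Borel measurable optimal transaction.) Let C be a transaction cost function, let a ≤ b be reals, and let V : [a,b] × 𝒮̄ → ℝ be continuous. Then there exists a Borel measurable function g : [a,b] × (𝒮̄ ∖ 𝒮_∅) → ℝ such that for every (t,x) ∈ [a,b] × (𝒮̄ ∖ 𝒮_∅): g(t,x) ∈ D(x) and V(t, Γ(x, g(t,x))) = inf_{Δ ∈ D(x)} V(t, Γ(x, Δ)); in particular the infimum defining M[V](t,x) is attained. -/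
open Set Filter

/-- Generalized inverse of `d ↦ d + C d`, truncated at `0`. -/
noncomputable def uinv (C : ℝ → ℝ) (s : ℝ) : ℝ := sInf {d | max s 0 ≤ d + C d}

lemma uinv_spec (C : ℝ → ℝ) (hC : IsCostFn C) (s : ℝ) :
    uinv C s + C (uinv C s) = max s 0 := by
  obtain ⟨-, -, -, hSM, hRange⟩ := hC
  obtain ⟨d, hd⟩ := hRange (le_max_right s 0)
  have hset : {d' : ℝ | max s 0 ≤ d' + C d'} = Set.Ici d := by
    ext d'
    simp only [Set.mem_setOf_eq, Set.mem_Ici]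
    constructor
    · intro h
      refine hSM.le_iff_le.mp ?_
      show d + C d ≤ d' + C d'
      have hd' : d + C d = max s 0 := hd
      linarith [h, hd'.ge]
    · intro h
      have := hSM.le_iff_le.mpr h
      simpa [hd] using this
  rw [uinv, hset, csInf_Ici]
  simpa using hd

lemma uinv_mono (C : ℝ → ℝ) (hC : IsCostFn C) : Monotone (uinv C) := by
  intro s₁ s₂ h
  have h1 := uinv_spec C hC s₁
  have h2 := uinv_spec C hC s₂
  have hSM := hC.2.2.2.1
  have : (fun d => d + C d) (uinv C s₁) ≤ (fun d => d + C d) (uinv C s₂) := by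
    simp only [h1, h2]
    exact max_le_max h le_rfl
  exact hSM.le_iff_le.mp this

lemma Dset_eq (C : ℝ → ℝ) (hC : IsCostFn C) {x : ℝ × ℝ} (hx : x ∈ Sbar) :
    Dset C x = Set.Icc (-x.2) (uinv C x.1) := by
  have hSM := hC.2.2.2.1
  have hspec := uinv_spec C hC x.1
  have hx1 : max x.1 0 = x.1 := max_eq_left hx.1
  rw [hx1] at hspec
  have key : ∀ e : ℝ, e ≤ uinv C x.1 ↔ e + C e ≤ x.1 := by
    intro e
    constructor
    · intro h
      have := hSM.le_iff_le.mpr h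
      simpa [hspec] using this
    · intro h
      have : (fun d => d + C d) e ≤ (fun d => d + C d) (uinv C x.1) := by
        simpa [hspec] using h
      exact hSM.le_iff_le.mp this
  ext d
  simp only [Dset, Gam, Sbar, Set.mem_setOf_eq, Set.mem_prod, Set.mem_Ici, Set.mem_Icc]
  constructor
  · rintro ⟨h1, h2⟩
    exact ⟨by linarith, (key d).mpr (by linarith)⟩
  · rintro ⟨h1, h2⟩
    have := (key d).mp h2
    exact ⟨by linarith, by linarith⟩

/-- Infimum over a compact interval is attained, and equals the countable infimum over
rational clamp points. -/
lemma clamp_inf (F : ℝ → ℝ) {L M : ℝ} (hLM : L ≤ M) (hF : ContinuousOn F (Set.Icc L M)) :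
    (∃ d ∈ Set.Icc L M, F d = sInf (F '' Set.Icc L M)) ∧
    (⨅ q : ℚ, F (max L (min (q : ℝ) M))) = sInf (F '' Set.Icc L M) := by
  have hK : IsCompact (Set.Icc L M) := isCompact_Icc
  have hne : (Set.Icc L M).Nonempty := Set.nonempty_Icc.mpr hLM
  have himg : IsCompact (F '' Set.Icc L M) := hK.image_of_continuousOn hF
  have hne' : (F '' Set.Icc L M).Nonempty := hne.image F
  obtain ⟨d₀, hd₀, hFd₀⟩ := himg.sInf_mem hne'
  have hbdd : BddBelow (F '' Set.Icc L M) := himg.bddBelow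
  have hproj : ∀ r : ℝ, max L (min r M) ∈ Set.Icc L M := fun r =>
    ⟨le_max_left _ _, max_le hLM (min_le_right _ _)⟩
  have hrange_bdd : BddBelow (Set.range fun q : ℚ => F (max L (min (q : ℝ) M))) := by
    apply hbdd.mono
    rintro y ⟨q, rfl⟩
    exact Set.mem_image_of_mem F (hproj q)
  refine ⟨⟨d₀, hd₀, hFd₀⟩, le_antisymm ?_ (le_ciInf fun q => csInf_le hbdd
    (Set.mem_image_of_mem F (hproj q)))⟩
  · rw [← hFd₀]
    have hcont : Continuous fun r : ℝ => F (max L (min r M)) :=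
      hF.comp_continuous (continuous_const.max (continuous_id.min continuous_const)) hproj
    have hc0 : max L (min d₀ M) = d₀ := by
      rw [min_eq_left hd₀.2, max_eq_right hd₀.1]
    by_contra hlt
    push_neg at hlt
    have hε : 0 < (⨅ q : ℚ, F (max L (min (q : ℝ) M))) - F d₀ := by linarith
    obtain ⟨δ, hδ, hδ'⟩ := Metric.continuous_iff.mp hcont d₀ _ hε
    obtain ⟨q, hq1, hq2⟩ := exists_rat_btwn (show d₀ - δ < d₀ by linarith)
    have hdist : dist (q : ℝ) d₀ < δ := by
      rw [Real.dist_eq, abs_lt]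
      constructor <;> linarith
    have := hδ' (q : ℝ) hdist
    rw [hc0, Real.dist_eq, abs_lt] at this
    have hle : (⨅ q : ℚ, F (max L (min (q : ℝ) M))) ≤ F (max L (min (q : ℝ) M)) :=
      ciInf_le hrange_bdd q
    linarith [this.2]

/-- (Existence of a Borel measurable optimal transaction.) -/
theorem exists_measurable_optimal_transaction
    (C : ℝ → ℝ) (hC : IsCostFn C)
    (a b : ℝ) (hab : a ≤ b)
    (V : ℝ × (ℝ × ℝ) → ℝ)
    (hV : ContinuousOn V (Set.Icc a b ×ˢ Sbar)) :
    ∃ g : ℝ × (ℝ × ℝ) → ℝ,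
      Measurable (fun p : ↥(Set.Icc a b ×ˢ (Sbar \ Sempty C)) => g ↑p) ∧
      ∀ p ∈ Set.Icc a b ×ˢ (Sbar \ Sempty C),
        g p ∈ Dset C p.2 ∧
        V (p.1, Gam C p.2 (g p)) = sInf {y | ∃ d ∈ Dset C p.2, y = V (p.1, Gam C p.2 d)} := by
  classical
  set T : Set (ℝ × (ℝ × ℝ)) := Set.Icc a b ×ˢ (Sbar \ Sempty C) with hTdef
  -- Basic objects
  let F : ℝ × (ℝ × ℝ) → ℝ → ℝ := fun p d => V (p.1, Gam C p.2 d)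
  let L : ℝ × (ℝ × ℝ) → ℝ := fun p => -p.2.2
  let U : ℝ × (ℝ × ℝ) → ℝ := fun p => uinv C p.2.1
  let m : ℝ × (ℝ × ℝ) → ℝ := fun p => ⨅ q : ℚ, F p (max (L p) (min (q : ℝ) (U p)))
  let mc : ℝ → ℝ × (ℝ × ℝ) → ℝ := fun c p =>
    ⨅ q : ℚ, F p (max (L p) (min (q : ℝ) (min c (U p))))
  let g : ℝ × (ℝ × ℝ) → ℝ := fun p =>
    sInf {d | d ∈ Set.Icc (L p) (U p) ∧ F p d ≤ m p}
  -- Facts about points of T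
  have hmemT : ∀ p ∈ T, p.1 ∈ Set.Icc a b ∧ p.2 ∈ Sbar ∧
      Dset C p.2 = Set.Icc (L p) (U p) ∧ L p ≤ U p := by
    intro p hp
    obtain ⟨hp1, hp2, hp3⟩ := hp
    have hDeq : Dset C p.2 = Set.Icc (L p) (U p) := Dset_eq C hC hp2
    have hne : (Dset C p.2).Nonempty := by
      rcases Set.eq_empty_or_nonempty (Dset C p.2) with h | h
      · exact absurd ⟨hp2, h⟩ hp3
      · exact h
    rw [hDeq] at hne
    exact ⟨hp1, hp2, hDeq, Set.nonempty_Icc.mp hne⟩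
  have hFcont : ∀ p ∈ T, ContinuousOn (F p) (Set.Icc (L p) (U p)) := by
    intro p hp
    obtain ⟨hp1, hp2, hDeq, hLU⟩ := hmemT p hp
    have hin : Continuous fun d : ℝ => (p.1, Gam C p.2 d) := by
      unfold Gam
      exact continuous_const.prodMk
        (((continuous_const.sub continuous_id).sub hC.1).prodMk
          (continuous_const.add continuous_id))
    apply hV.comp hin.continuousOn
    intro d hd
    rw [← hDeq] at hd
    exact ⟨hp1, hd⟩
  -- The minimizer facts
  have hmain : ∀ p ∈ T, g p ∈ Set.Icc (L p) (U p) ∧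
      F p (g p) = sInf (F p '' Set.Icc (L p) (U p)) ∧
      m p = sInf (F p '' Set.Icc (L p) (U p)) := by
    intro p hp
    obtain ⟨hp1, hp2, hDeq, hLU⟩ := hmemT p hp
    obtain ⟨⟨d₀, hd₀, hFd₀⟩, hiInf⟩ := clamp_inf (F p) hLU (hFcont p hp)
    have hmval : m p = sInf (F p '' Set.Icc (L p) (U p)) := hiInf
    have hAne : ({d | d ∈ Set.Icc (L p) (U p) ∧ F p d ≤ m p}).Nonempty :=
      ⟨d₀, hd₀, by rw [hFd₀, hmval]⟩
    have hAclosed : IsClosed {d | d ∈ Set.Icc (L p) (U p) ∧ F p d ≤ m p} := by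
      have : {d | d ∈ Set.Icc (L p) (U p) ∧ F p d ≤ m p} =
          Set.Icc (L p) (U p) ∩ F p ⁻¹' Set.Iic (m p) := by
        ext d; simp [Set.mem_Iic]
      rw [this]
      exact (hFcont p hp).preimage_isClosed_of_isClosed isClosed_Icc isClosed_Iic
    have hAbdd : BddBelow {d | d ∈ Set.Icc (L p) (U p) ∧ F p d ≤ m p} :=
      ⟨L p, fun d hd => hd.1.1⟩
    have hgA : g p ∈ {d | d ∈ Set.Icc (L p) (U p) ∧ F p d ≤ m p} :=
      hAclosed.csInf_mem hAne hAbdd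
    have hbddimg : BddBelow (F p '' Set.Icc (L p) (U p)) :=
      (isCompact_Icc.image_of_continuousOn (hFcont p hp)).bddBelow
    refine ⟨hgA.1, le_antisymm (hgA.2.trans hmval.le) ?_, hmval⟩
    exact csInf_le hbddimg (Set.mem_image_of_mem (F p) hgA.1)
  -- Characterization of sublevel sets of g
  have hchar : ∀ p ∈ T, ∀ c : ℝ, (g p ≤ c ↔ L p ≤ c ∧ mc c p ≤ m p) := by
    intro p hp c
    obtain ⟨hp1, hp2, hDeq, hLU⟩ := hmemT p hp
    obtain ⟨hgIcc, hgval, hmval⟩ := hmain p hp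
    constructor
    · intro hgc
      have hLc : L p ≤ c := hgIcc.1.trans hgc
      refine ⟨hLc, ?_⟩
      have hLMc : L p ≤ min c (U p) := le_min hLc hLU
      have hsub : Set.Icc (L p) (min c (U p)) ⊆ Set.Icc (L p) (U p) :=
        Set.Icc_subset_Icc le_rfl (min_le_right _ _)
      obtain ⟨-, hiInfc⟩ := clamp_inf (F p) hLMc ((hFcont p hp).mono hsub)
      have hmceq : mc c p = sInf (F p '' Set.Icc (L p) (min c (U p))) := hiInfc
      rw [hmceq]
      have hgin : g p ∈ Set.Icc (L p) (min c (U p)) := ⟨hgIcc.1, le_min hgc hgIcc.2⟩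
      calc sInf (F p '' Set.Icc (L p) (min c (U p))) ≤ F p (g p) :=
            csInf_le ((isCompact_Icc.image_of_continuousOn
              ((hFcont p hp).mono hsub)).bddBelow) (Set.mem_image_of_mem _ hgin)
        _ = m p := hgval.trans hmval.symm
    · rintro ⟨hLc, hmc⟩
      have hLMc : L p ≤ min c (U p) := le_min hLc hLU
      have hsub : Set.Icc (L p) (min c (U p)) ⊆ Set.Icc (L p) (U p) :=
        Set.Icc_subset_Icc le_rfl (min_le_right _ _)
      obtain ⟨⟨d₁, hd₁, hFd₁⟩, hiInfc⟩ := clamp_inf (F p) hLMc ((hFcont p hp).mono hsub)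
      have h1 : F p d₁ ≤ m p := by
        rw [hFd₁, ← hiInfc]; exact hmc
      have hgle : g p ≤ d₁ := csInf_le ⟨L p, fun d hd => hd.1.1⟩ ⟨hsub hd₁, h1⟩
      exact hgle.trans (hd₁.2.trans (min_le_left _ _))
  -- Measurability building blocks on the subtype
  have hcoe : Measurable ((↑) : T → ℝ × (ℝ × ℝ)) := measurable_subtype_coe
  have hLmeas : Measurable fun p : T => L ↑p :=
    (measurable_snd.comp (measurable_snd.comp hcoe)).neg
  have hUmeas : Measurable fun p : T => U ↑p :=
    (uinv_mono C hC).measurable.comp (measurable_fst.comp (measurable_snd.comp hcoe))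
  have hFmeas : ∀ w : ℝ × (ℝ × ℝ) → ℝ, Measurable (fun p : T => w ↑p) →
      (∀ p : T, w ↑p ∈ Set.Icc (L ↑p) (U ↑p)) →
      Measurable fun p : T => F ↑p (w ↑p) := by
    intro w hw hmem
    have hmaps : ∀ p : T, ((↑p : ℝ × (ℝ × ℝ)).1, Gam C (↑p : ℝ × (ℝ × ℝ)).2 (w ↑p)) ∈
        Set.Icc a b ×ˢ Sbar := by
      intro p
      obtain ⟨hp1, hp2, hDeq, hLU⟩ := hmemT ↑p p.2
      refine ⟨hp1, ?_⟩
      have : w ↑p ∈ Dset C (↑p : ℝ × (ℝ × ℝ)).2 := by rw [hDeq]; exact hmem p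
      exact this
    have hΦ : Measurable fun p : T =>
        ((↑p : ℝ × (ℝ × ℝ)).1, Gam C (↑p : ℝ × (ℝ × ℝ)).2 (w ↑p)) := by
      unfold Gam
      refine (measurable_fst.comp hcoe).prodMk (Measurable.prodMk ?_ ?_)
      · exact ((measurable_fst.comp (measurable_snd.comp hcoe)).sub hw).sub
          (hC.1.measurable.comp hw)
      · exact (measurable_snd.comp (measurable_snd.comp hcoe)).add hw
    have hVr : Continuous fun q : (Set.Icc a b ×ˢ Sbar : Set (ℝ × (ℝ × ℝ))) => V ↑q :=
      continuousOn_iff_continuous_restrict.mp hV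
    exact hVr.measurable.comp (hΦ.subtype_mk (h := hmaps))
  have hclampmem : ∀ (e : T → ℝ) (p : T), max (L ↑p) (min (e p) (U ↑p)) ∈
      Set.Icc (L ↑p) (U ↑p) := by
    intro e p
    obtain ⟨-, -, -, hLU⟩ := hmemT ↑p p.2
    exact ⟨le_max_left _ _, max_le hLU (min_le_right _ _)⟩
  have hmmeas : Measurable fun p : T => m ↑p := by
    apply Measurable.iInf
    intro q
    apply hFmeas (fun p => max (L p) (min (q : ℝ) (U p)))
    · exact hLmeas.max (measurable_const.min hUmeas)
    · exact fun p => hclampmem (fun _ => (q : ℝ)) p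
  have hmcmeas : ∀ c : ℝ, Measurable fun p : T => mc c ↑p := by
    intro c
    apply Measurable.iInf
    intro q
    apply hFmeas (fun p => max (L p) (min (q : ℝ) (min c (U p))))
    · exact hLmeas.max (measurable_const.min (measurable_const.min hUmeas))
    · intro p
      obtain ⟨-, -, -, hLU⟩ := hmemT ↑p p.2
      exact ⟨le_max_left _ _, max_le hLU ((min_le_right _ _).trans (min_le_right _ _))⟩
  have hgmeas : Measurable fun p : T => g ↑p := by
    apply measurable_of_Iic
    intro c
    have hset : (fun p : T => g ↑p) ⁻¹' Set.Iic c =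
        {p : T | L ↑p ≤ c} ∩ {p : T | mc c ↑p ≤ m ↑p} := by
      ext p
      simp only [Set.mem_preimage, Set.mem_Iic, Set.mem_inter_iff, Set.mem_setOf_eq]
      exact hchar ↑p p.2 c
    rw [hset]
    exact (measurableSet_le hLmeas measurable_const).inter
      (measurableSet_le (hmcmeas c) hmmeas)
  -- Conclusion
  refine ⟨g, hgmeas, ?_⟩
  intro p hp
  obtain ⟨hp1, hp2, hDeq, hLU⟩ := hmemT p hp
  obtain ⟨hgIcc, hgval, hmval⟩ := hmain p hp
  have hsets : {y | ∃ d ∈ Dset C p.2, y = V (p.1, Gam C p.2 d)} =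
      F p '' Set.Icc (L p) (U p) := by
    rw [← hDeq]
    ext y
    simp only [Set.mem_setOf_eq, Set.mem_image]
    constructor
    · rintro ⟨d, hd, rfl⟩
      exact ⟨d, hd, rfl⟩
    · rintro ⟨d, hd, rfl⟩
      exact ⟨d, hd, rfl⟩
  constructor
  · rw [hDeq]; exact hgIcc
  · rw [hsets]; exact hgval
end

section
/- (Existence of a Borel measurable optimal goal-funding amount.) Let w > 0, G > 0 and let V : 𝒮̄ → ℝ be continuous. Then there exists a Borel measurable function Θ : 𝒮̄ → ℝ such that for every x = (x₀,x₁) ∈ 𝒮̄: 0 ≤ Θ(x) ≤ x₀ and w (G − Θ(x))⁺ + V(x₀ − Θ(x), x₁) = inf_{0 ≤ θ ≤ x₀} [ w (G − θ)⁺ + V(x₀ − θ, x₁) ]. -/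
open Set Filter

namespace OptFund

lemma mem_Sbar {x : ℝ × ℝ} : x ∈ Sbar ↔ 0 ≤ x.1 ∧ 0 ≤ x.2 := by
  simp [Sbar, Set.mem_prod]; rfl

/-- The objective. -/
noncomputable def f (w G : ℝ) (V : ℝ × ℝ → ℝ) (x : ℝ × ℝ) (θ : ℝ) : ℝ :=
  w * max (G - θ) 0 + V (x.1 - θ, x.2)

/-- Clamp a rational into `[0,c]`. -/
noncomputable def clamp (c : ℝ) (q : ℚ) : ℝ := min (max (q : ℝ) 0) c

lemma clamp_mem {c : ℝ} (hc : 0 ≤ c) (q : ℚ) : clamp c q ∈ Icc 0 c :=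
  ⟨le_min (le_max_right _ _) hc, min_le_right _ _⟩

lemma f_contOn (w G : ℝ) {V : ℝ × ℝ → ℝ} (hV : ContinuousOn V Sbar) {x : ℝ × ℝ}
    (hx : x ∈ Sbar) : ContinuousOn (f w G V x) (Icc 0 x.1) := by
  have h1 : Continuous fun θ : ℝ => w * max (G - θ) 0 :=
    continuous_const.mul ((continuous_const.sub continuous_id).max continuous_const)
  have h2 : ContinuousOn (fun θ : ℝ => V (x.1 - θ, x.2)) (Icc 0 x.1) := by
    apply hV.comp ((continuous_const.sub continuous_id).prodMk continuous_const).continuousOn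
    intro θ hθ
    exact mem_Sbar.2 ⟨by simpa using hθ.2, (mem_Sbar.1 hx).2⟩
  exact h1.continuousOn.add h2

lemma exists_min (w G : ℝ) {V : ℝ × ℝ → ℝ} (hV : ContinuousOn V Sbar) {x : ℝ × ℝ}
    (hx : x ∈ Sbar) {c : ℝ} (h0 : 0 ≤ c) (hc : c ≤ x.1) :
    ∃ a ∈ Icc 0 c, ∀ θ ∈ Icc 0 c, f w G V x a ≤ f w G V x θ := by
  obtain ⟨a, ha, hmin⟩ := isCompact_Icc.exists_isMinOn ⟨0, by exact ⟨le_refl 0, h0⟩⟩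
    ((f_contOn w G hV hx).mono (Icc_subset_Icc le_rfl hc))
  exact ⟨a, ha, fun θ hθ => hmin hθ⟩

/-- The countable infimum equals the infimum over the compact interval. -/
lemma key (w G : ℝ) {V : ℝ × ℝ → ℝ} (hV : ContinuousOn V Sbar) {x : ℝ × ℝ}
    (hx : x ∈ Sbar) {c : ℝ} (h0 : 0 ≤ c) (hc : c ≤ x.1) :
    sInf (f w G V x '' Icc 0 c) = ⨅ q : ℚ, f w G V x (clamp c q) := by
  have hfc : ContinuousOn (f w G V x) (Icc 0 c) :=
    (f_contOn w G hV hx).mono (Icc_subset_Icc le_rfl hc)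
  have himg : IsCompact (f w G V x '' Icc 0 c) := isCompact_Icc.image_of_continuousOn hfc
  have hbdd : BddBelow (f w G V x '' Icc 0 c) := himg.bddBelow
  have hne : (f w G V x '' Icc 0 c).Nonempty := ⟨_, mem_image_of_mem _ ⟨le_refl 0, h0⟩⟩
  obtain ⟨a, ha, hmin⟩ := exists_min w G hV hx h0 hc
  -- range of clamp is dense in Icc 0 c
  have hrange_sub : range (clamp c) ⊆ Icc 0 c := range_subset_iff.2 (clamp_mem h0)
  have hacl : a ∈ closure (range (clamp c)) := by
    have hg : Continuous fun y : ℝ => min (max y 0) c :=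
      (continuous_id.max continuous_const).min continuous_const
    have hmem : a ∈ (fun y : ℝ => min (max y 0) c) '' closure (range ((↑) : ℚ → ℝ)) := by
      refine ⟨a, ?_, ?_⟩
      · simp [Rat.denseRange_cast.closure_range]
      · show min (max a 0) c = a
        rw [max_eq_left ha.1, min_eq_left ha.2]
    have h3 := image_closure_subset_closure_image hg hmem
    rwa [show ((fun y : ℝ => min (max y 0) c) '' range ((↑) : ℚ → ℝ)) = range (clamp c) by
      rw [← range_comp]; rfl] at h3
  have hclos_sub : closure (range (clamp c)) ⊆ Icc 0 c :=
    closure_minimal hrange_sub isClosed_Icc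
  have hfa_cl : f w G V x a ∈ closure (range fun q : ℚ => f w G V x (clamp c q)) := by
    have : f w G V x a ∈ f w G V x '' closure (range (clamp c)) := mem_image_of_mem _ hacl
    have hsub := (hfc.mono hclos_sub).image_closure (s := range (clamp c))
    have := hsub this
    rwa [← range_comp] at this
  have hbdd2 : BddBelow (range fun q : ℚ => f w G V x (clamp c q)) := by
    apply hbdd.mono
    rintro y ⟨q, rfl⟩
    exact mem_image_of_mem _ (clamp_mem h0 q)
  apply le_antisymm
  · exact le_ciInf fun q => csInf_le hbdd (mem_image_of_mem _ (clamp_mem h0 q))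
  · -- ⨅ ≤ f x a ≤ sInf image
    have h1 : (⨅ q : ℚ, f w G V x (clamp c q)) ≤ f w G V x a := by
      have : closure (range fun q : ℚ => f w G V x (clamp c q)) ⊆
          Ici (sInf (range fun q : ℚ => f w G V x (clamp c q))) :=
        closure_minimal (fun y hy => csInf_le hbdd2 hy) isClosed_Ici
      exact this hfa_cl
    have h2 : f w G V x a ≤ sInf (f w G V x '' Icc 0 c) := by
      apply le_csInf hne
      rintro y ⟨θ, hθ, rfl⟩
      exact hmin θ hθ
    exact h1.trans h2

/-- The (measurable) value function with varying upper end `c x`. -/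
noncomputable def mval (w G : ℝ) (V : ℝ × ℝ → ℝ) (c : ℝ × ℝ → ℝ) (x : ℝ × ℝ) : ℝ :=
  ⨅ q : ℚ, f w G V x (clamp (c x) q)

lemma mval_measurable (w G : ℝ) {V : ℝ × ℝ → ℝ} (hV : ContinuousOn V Sbar)
    {c : ℝ × ℝ → ℝ} (hc : Continuous fun x : ↥Sbar => c ↑x)
    (hc0 : ∀ x : ↥Sbar, 0 ≤ c ↑x) (hc1 : ∀ x : ↥Sbar, c ↑x ≤ (x : ℝ × ℝ).1) :
    Measurable fun x : ↥Sbar => mval w G V c ↑x := by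
  apply Measurable.iInf
  intro q
  have hθ : Continuous fun x : ↥Sbar => clamp (c ↑x) q := continuous_const.min hc
  have h1 : Continuous fun x : ↥Sbar => w * max (G - clamp (c ↑x) q) 0 :=
    continuous_const.mul ((continuous_const.sub hθ).max continuous_const)
  have hmap : ∀ x : ↥Sbar, ((x : ℝ × ℝ).1 - clamp (c ↑x) q, (x : ℝ × ℝ).2) ∈ Sbar := by
    intro x
    refine mem_Sbar.2 ⟨sub_nonneg.2 ((min_le_right _ _).trans (hc1 x)), (mem_Sbar.1 x.2).2⟩
  have hh : Continuous fun x : ↥Sbar =>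
      ((x : ℝ × ℝ).1 - clamp (c ↑x) q, (x : ℝ × ℝ).2) :=
    ((continuous_subtype_val.fst).sub hθ).prodMk continuous_subtype_val.snd
  have h2 : Continuous fun x : ↥Sbar =>
      V ((x : ℝ × ℝ).1 - clamp (c ↑x) q, (x : ℝ × ℝ).2) :=
    hV.comp_continuous hh hmap
  exact (h1.add h2).measurable

/-- The true value function. -/
noncomputable def m (w G : ℝ) (V : ℝ × ℝ → ℝ) (x : ℝ × ℝ) : ℝ :=
  mval w G V (fun x => x.1) x

/-- The argmin set. -/
def A (w G : ℝ) (V : ℝ × ℝ → ℝ) (x : ℝ × ℝ) : Set ℝ :=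
  {θ | θ ∈ Icc 0 x.1 ∧ f w G V x θ ≤ m w G V x}

/-- The selector: the least minimizer. -/
noncomputable def Θ (w G : ℝ) (V : ℝ × ℝ → ℝ) (x : ℝ × ℝ) : ℝ :=
  sInf (A w G V x)

lemma m_eq (w G : ℝ) {V : ℝ × ℝ → ℝ} (hV : ContinuousOn V Sbar) {x : ℝ × ℝ}
    (hx : x ∈ Sbar) : m w G V x = sInf (f w G V x '' Icc 0 x.1) :=
  (key w G hV hx (mem_Sbar.1 hx).1 le_rfl).symm

lemma A_facts (w G : ℝ) {V : ℝ × ℝ → ℝ} (hV : ContinuousOn V Sbar) {x : ℝ × ℝ}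
    (hx : x ∈ Sbar) :
    Θ w G V x ∈ A w G V x ∧ f w G V x (Θ w G V x) = m w G V x := by
  have h0 : (0:ℝ) ≤ x.1 := (mem_Sbar.1 hx).1
  have hfc : ContinuousOn (f w G V x) (Icc 0 x.1) := f_contOn w G hV hx
  have hbdd : BddBelow (f w G V x '' Icc 0 x.1) :=
    (isCompact_Icc.image_of_continuousOn hfc).bddBelow
  obtain ⟨a, ha, hmin⟩ := exists_min w G hV hx h0 le_rfl
  have hfa : f w G V x a = m w G V x := by
    rw [m_eq w G hV hx]
    apply le_antisymm
    · exact le_csInf ⟨_, mem_image_of_mem _ ha⟩ (by rintro y ⟨θ, hθ, rfl⟩; exact hmin θ hθ)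
    · exact csInf_le hbdd (mem_image_of_mem _ ha)
  have hAne : (A w G V x).Nonempty := ⟨a, ha, hfa.le⟩
  have hAbdd : BddBelow (A w G V x) := ⟨0, fun θ hθ => hθ.1.1⟩
  have hAclosed : IsClosed (A w G V x) := by
    have h := hfc.preimage_isClosed_of_isClosed isClosed_Icc (isClosed_Iic (a := m w G V x))
    have heq : A w G V x = Icc 0 x.1 ∩ f w G V x ⁻¹' Iic (m w G V x) := by
      ext θ; simp [A]
    rw [heq]; exact h
  have hmem : Θ w G V x ∈ A w G V x := hAclosed.csInf_mem hAne hAbdd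
  refine ⟨hmem, le_antisymm hmem.2 ?_⟩
  rw [m_eq w G hV hx]
  exact csInf_le hbdd (mem_image_of_mem _ hmem.1)

lemma Theta_measurable (w G : ℝ) {V : ℝ × ℝ → ℝ} (hV : ContinuousOn V Sbar) :
    Measurable fun x : ↥Sbar => Θ w G V ↑x := by
  have hm : Measurable fun x : ↥Sbar => m w G V ↑x :=
    mval_measurable w G hV (continuous_subtype_val.fst)
      (fun x => (mem_Sbar.1 x.2).1) (fun x => le_rfl)
  apply measurable_of_Iic
  intro t
  rcases lt_or_ge t 0 with ht | ht
  · have : (fun x : ↥Sbar => Θ w G V ↑x) ⁻¹' Iic t = ∅ := by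
      ext x
      simp only [mem_preimage, mem_Iic, mem_empty_iff_false, iff_false, not_le]
      exact lt_of_lt_of_le ht (A_facts w G hV x.2).1.1.1
    rw [this]; exact MeasurableSet.empty
  · -- the value function truncated at t
    have hc0 : ∀ x : ↥Sbar, (0:ℝ) ≤ min t (x : ℝ × ℝ).1 :=
      fun x => le_min ht (mem_Sbar.1 x.2).1
    have hc1 : ∀ x : ↥Sbar, min t (x : ℝ × ℝ).1 ≤ (x : ℝ × ℝ).1 := fun x => min_le_right _ _
    have hMt : Measurable fun x : ↥Sbar => mval w G V (fun x => min t x.1) ↑x :=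
      mval_measurable w G hV (continuous_const.min continuous_subtype_val.fst) hc0 hc1
    have hset : (fun x : ↥Sbar => Θ w G V ↑x) ⁻¹' Iic t
        = {x : ↥Sbar | mval w G V (fun x => min t x.1) ↑x ≤ m w G V ↑x} := by
      ext x
      obtain ⟨hmemA, hfΘ⟩ := A_facts w G hV x.2
      have hMt_eq : mval w G V (fun x => min t x.1) ↑x
          = sInf (f w G V ↑x '' Icc 0 (min t (x : ℝ × ℝ).1)) :=
        (key w G hV x.2 (hc0 x) (hc1 x)).symm
      have hbdd : BddBelow (f w G V ↑x '' Icc 0 (min t (x : ℝ × ℝ).1)) :=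
        ((isCompact_Icc.image_of_continuousOn
          ((f_contOn w G hV x.2).mono (Icc_subset_Icc le_rfl (hc1 x))))).bddBelow
      simp only [mem_preimage, mem_Iic, mem_setOf_eq]
      constructor
      · intro hΘt
        rw [hMt_eq, ← hfΘ]
        exact csInf_le hbdd (mem_image_of_mem _ ⟨hmemA.1.1, le_min hΘt hmemA.1.2⟩)
      · intro hle
        obtain ⟨a, ha, hmin⟩ := exists_min w G hV x.2 (hc0 x) (hc1 x)
        have hfa : f w G V ↑x a ≤ m w G V ↑x := by
          refine le_trans ?_ hle
          rw [hMt_eq]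
          exact le_csInf ⟨_, mem_image_of_mem _ ha⟩
            (by rintro y ⟨θ, hθ, rfl⟩; exact hmin θ hθ)
        have haA : a ∈ A w G V ↑x := ⟨⟨ha.1, ha.2.trans (hc1 x)⟩, hfa⟩
        have : Θ w G V ↑x ≤ a := csInf_le ⟨0, fun θ hθ => hθ.1.1⟩ haA
        exact this.trans (ha.2.trans (min_le_left _ _))
    rw [hset]
    exact measurableSet_le hMt hm

end OptFund

/-- (Existence of a Borel measurable optimal goal-funding amount.) -/
theorem exists_measurable_optimal_funding
    (w G : ℝ) (hw : 0 < w) (hG : 0 < G)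
    (V : ℝ × ℝ → ℝ) (hV : ContinuousOn V Sbar) :
    ∃ Θ : ℝ × ℝ → ℝ,
      Measurable (fun x : ↥Sbar => Θ ↑x) ∧
      ∀ x ∈ Sbar,
        0 ≤ Θ x ∧ Θ x ≤ x.1 ∧
        w * max (G - Θ x) 0 + V (x.1 - Θ x, x.2)
          = sInf {y | ∃ θ : ℝ, 0 ≤ θ ∧ θ ≤ x.1 ∧ y = w * max (G - θ) 0 + V (x.1 - θ, x.2)} := by
  refine ⟨OptFund.Θ w G V, OptFund.Theta_measurable w G hV, fun x hx => ?_⟩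
  obtain ⟨hmemA, hfΘ⟩ := OptFund.A_facts w G hV hx
  refine ⟨hmemA.1.1, hmemA.1.2, ?_⟩
  have hset : {y | ∃ θ : ℝ, 0 ≤ θ ∧ θ ≤ x.1 ∧ y = w * max (G - θ) 0 + V (x.1 - θ, x.2)}
      = OptFund.f w G V x '' Icc 0 x.1 := by
    ext y
    simp only [mem_setOf_eq, mem_image, mem_Icc, OptFund.f]
    constructor
    · rintro ⟨θ, h1, h2, rfl⟩; exact ⟨θ, ⟨h1, h2⟩, rfl⟩
    · rintro ⟨θ, ⟨h1, h2⟩, rfl⟩; exact ⟨θ, h1, h2, rfl⟩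
  rw [hset, ← OptFund.m_eq w G hV hx]
  exact hfΘ
end

section
/- (Lower semicontinuity of the goal-funding infimum.) Let w > 0, G > 0 and let g : 𝒮̄ → ℝ be lower semicontinuous. Then the function h : 𝒮̄ → ℝ defined by h(x₀, x₁) := inf_{0 ≤ θ ≤ x₀} [ w (G − θ)⁺ + g(x₀ − θ, x₁) ] is lower semicontinuous on 𝒮̄, and for each x the infimum is attained. -/
open Set Filter Topology

/-- An LSC function on a nonempty compact subset of ℝ attains its minimum. -/
lemma lsc_compact_min {s : Set ℝ} (hs : IsCompact s) (hne : s.Nonempty)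
    {f : ℝ → ℝ} (hf : LowerSemicontinuousOn f s) : ∃ x ∈ s, ∀ y ∈ s, f x ≤ f y := by
  by_cases hb : BddBelow (f '' s)
  · set m := sInf (f '' s) with hm
    have hsel : ∀ n : ℕ, ∃ x ∈ s, f x < m + 1 / (n + 1) := by
      intro n
      have hpos : (0 : ℝ) < 1 / (n + 1) := by positivity
      have hlt : m < m + 1 / (n + 1) := by linarith
      obtain ⟨b, ⟨x, hx, rfl⟩, hbx⟩ := (csInf_lt_iff hb (hne.image f)).1 hlt
      exact ⟨x, hx, hbx⟩
    choose u hu hfu using hsel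
    obtain ⟨x, hxs, φ, hφ, hlim⟩ := hs.tendsto_subseq hu
    refine ⟨x, hxs, fun y hy => ?_⟩
    have hfx_le : f x ≤ m := by
      by_contra hlt
      push_neg at hlt
      set c := (m + f x) / 2 with hc
      have h1 : m < c := by simp only [hc]; linarith
      have h2 : c < f x := by simp only [hc]; linarith
      have hwithin : Tendsto (fun n => u (φ n)) atTop (𝓝[s] x) :=
        tendsto_nhdsWithin_of_tendsto_nhds_of_eventually_within _ hlim
          (Eventually.of_forall fun n => hu _)
      have hev := hwithin.eventually (hf x hxs c h2)
      obtain ⟨N, hN⟩ := exists_nat_one_div_lt (show (0:ℝ) < c - m by linarith)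
      obtain ⟨N', hN', hN'2⟩ := (hev.and (eventually_ge_atTop N)).exists
      have hφN : (N : ℝ) + 1 ≤ (φ N' : ℝ) + 1 := by
        have : N ≤ φ N' := le_trans hN'2 (hφ.le_apply)
        exact_mod_cast by omega
      have hdiv : 1 / ((φ N' : ℝ) + 1) ≤ 1 / ((N : ℝ) + 1) := by
        apply one_div_le_one_div_of_le (by positivity) hφN
      have := hfu (φ N')
      have : f (u (φ N')) < m + (c - m) := by
        calc f (u (φ N')) < m + 1 / ((φ N' : ℝ) + 1) := hfu (φ N')
          _ ≤ m + 1 / ((N : ℝ) + 1) := by linarith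
          _ < m + (c - m) := by linarith
      linarith [hN', this]
    calc f x ≤ m := hfx_le
      _ ≤ f y := csInf_le hb ⟨y, hy, rfl⟩
  · exfalso
    rw [not_bddBelow_iff] at hb
    have hsel : ∀ n : ℕ, ∃ x ∈ s, f x < -n := by
      intro n
      obtain ⟨b, ⟨x, hx, rfl⟩, hbx⟩ := hb (-n)
      exact ⟨x, hx, hbx⟩
    choose u hu hfu using hsel
    obtain ⟨x, hxs, φ, hφ, hlim⟩ := hs.tendsto_subseq hu
    have hwithin : Tendsto (fun n => u (φ n)) atTop (𝓝[s] x) :=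
      tendsto_nhdsWithin_of_tendsto_nhds_of_eventually_within _ hlim
        (Eventually.of_forall fun n => hu _)
    have hev := hwithin.eventually (hf x hxs (f x - 1) (by linarith))
    obtain ⟨N, hN⟩ := exists_nat_ge (1 - f x)
    obtain ⟨N', hN'1, hN'2⟩ := (hev.and (eventually_ge_atTop N)).exists
    have hφN : (N : ℝ) ≤ (φ N' : ℝ) := by
      exact_mod_cast le_trans hN'2 hφ.le_apply
    have := hfu (φ N')
    have : f (u (φ N')) < f x - 1 := by
      calc f (u (φ N')) < -(φ N' : ℝ) := hfu (φ N')
        _ ≤ -(N : ℝ) := by linarith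
        _ ≤ f x - 1 := by linarith
    linarith [hN'1]

/-- (Lower semicontinuity of the goal-funding infimum, with attainment.) -/
theorem goal_funding_inf_lsc
    (w G : ℝ) (hw : 0 < w) (hG : 0 < G)
    (g : ℝ × ℝ → ℝ) (hg : LowerSemicontinuousOn g Sbar)
    (h : ℝ × ℝ → ℝ)
    (hh : ∀ x : ℝ × ℝ, h x = sInf {y | ∃ θ : ℝ, 0 ≤ θ ∧ θ ≤ x.1 ∧
      y = w * max (G - θ) 0 + g (x.1 - θ, x.2)}) :
    LowerSemicontinuousOn h Sbar ∧
      ∀ x ∈ Sbar, ∃ θ : ℝ, 0 ≤ θ ∧ θ ≤ x.1 ∧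
        h x = w * max (G - θ) 0 + g (x.1 - θ, x.2) := by
  -- key attainment fact
  have key : ∀ z ∈ Sbar, ∃ θ : ℝ, 0 ≤ θ ∧ θ ≤ z.1 ∧
      IsLeast {y | ∃ θ' : ℝ, 0 ≤ θ' ∧ θ' ≤ z.1 ∧
        y = w * max (G - θ') 0 + g (z.1 - θ', z.2)}
        (w * max (G - θ) 0 + g (z.1 - θ, z.2)) := by
    intro z hz
    have hz1 : (0:ℝ) ≤ z.1 := hz.1
    have hz2 : (0:ℝ) ≤ z.2 := hz.2
    set F : ℝ → ℝ := fun θ => w * max (G - θ) 0 + g (z.1 - θ, z.2) with hF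
    have hFlsc : LowerSemicontinuousOn F (Icc 0 z.1) := by
      apply LowerSemicontinuousOn.add
      · exact (Continuous.lowerSemicontinuous (by fun_prop)).lowerSemicontinuousOn _
      · intro θ hθ c hc
        have hmem : (z.1 - θ, z.2) ∈ Sbar := ⟨sub_nonneg.2 hθ.2, hz2⟩
        have hcont : ContinuousWithinAt (fun θ : ℝ => (z.1 - θ, z.2)) (Icc 0 z.1) θ :=
          (Continuous.continuousWithinAt (by fun_prop))
        have hmaps : MapsTo (fun θ : ℝ => (z.1 - θ, z.2)) (Icc 0 z.1) Sbar :=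
          fun t ht => ⟨sub_nonneg.2 ht.2, hz2⟩
        exact (hcont.tendsto_nhdsWithin hmaps).eventually (hg _ hmem c hc)
    obtain ⟨θ, hθmem, hmin⟩ := lsc_compact_min isCompact_Icc
      (nonempty_Icc.2 hz1) hFlsc
    refine ⟨θ, hθmem.1, hθmem.2, ⟨⟨θ, hθmem.1, hθmem.2, rfl⟩, ?_⟩⟩
    rintro y ⟨θ', h1, h2, rfl⟩
    exact hmin θ' ⟨h1, h2⟩
  have hval : ∀ z ∈ Sbar, ∃ θ : ℝ, 0 ≤ θ ∧ θ ≤ z.1 ∧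
      h z = w * max (G - θ) 0 + g (z.1 - θ, z.2) ∧
      ∀ θ' : ℝ, 0 ≤ θ' → θ' ≤ z.1 →
        h z ≤ w * max (G - θ') 0 + g (z.1 - θ', z.2) := by
    intro z hz
    obtain ⟨θ, h1, h2, hLst⟩ := key z hz
    refine ⟨θ, h1, h2, by rw [hh z]; exact hLst.csInf_eq, ?_⟩
    intro θ' ha hb
    rw [hh z, hLst.csInf_eq]
    exact hLst.2 ⟨θ', ha, hb, rfl⟩
  constructor
  · -- lower semicontinuity
    intro x hx c hc
    by_contra hcon
    rw [Filter.not_eventually] at hcon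
    simp only [not_lt] at hcon
    have hfreq : ∃ᶠ z in 𝓝[Sbar] x, z ∈ Sbar ∧ h z ≤ c :=
      (hcon.and_eventually self_mem_nhdsWithin).mono (fun z hz => ⟨hz.2, hz.1⟩)
    obtain ⟨y, hy_tend, hy⟩ := exists_seq_forall_of_frequently hfreq
    have hyS : ∀ n, y n ∈ Sbar := fun n => (hy n).1
    have hyc : ∀ n, h (y n) ≤ c := fun n => (hy n).2
    have hy_nhds : Tendsto y atTop (𝓝 x) := hy_tend.mono_right nhdsWithin_le_nhds
    -- choose minimizers
    choose θ hθ0 hθle hθeq hθmin using fun n => hval (y n) (hyS n)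
    -- first coordinates converge
    have hy1 : Tendsto (fun n => (y n).1) atTop (𝓝 x.1) :=
      (continuous_fst.tendsto x).comp hy_nhds
    have hy2 : Tendsto (fun n => (y n).2) atTop (𝓝 x.2) :=
      (continuous_snd.tendsto x).comp hy_nhds
    obtain ⟨N, hN⟩ := (hy1.eventually (eventually_le_nhds (lt_add_one x.1))).exists_forall_of_atTop
    -- subsequence of θ converging
    have hθmem : ∀ n, θ (n + N) ∈ Icc (0:ℝ) (x.1 + 1) :=
      fun n => ⟨hθ0 _, le_trans (hθle _) (hN _ (Nat.le_add_left N n))⟩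
    obtain ⟨θs, hθsmem, φ, hφ, hθlim⟩ := isCompact_Icc.tendsto_subseq hθmem
    set Y : ℕ → ℝ × ℝ := fun n => y (φ n + N) with hY
    set Θ : ℕ → ℝ := fun n => θ (φ n + N) with hΘ
    have hsub_atTop : Tendsto (fun n => φ n + N) atTop atTop :=
      tendsto_atTop_mono (fun n => (hφ.le_apply).trans (Nat.le_add_right _ _)) tendsto_id
    have hY_nhds : Tendsto Y atTop (𝓝 x) := hy_nhds.comp hsub_atTop
    have hY1 : Tendsto (fun n => (Y n).1) atTop (𝓝 x.1) :=
      (continuous_fst.tendsto x).comp hY_nhds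
    have hY2 : Tendsto (fun n => (Y n).2) atTop (𝓝 x.2) :=
      (continuous_snd.tendsto x).comp hY_nhds
    have hΘlim : Tendsto Θ atTop (𝓝 θs) := hθlim
    -- θs is feasible for x
    have hθs0 : 0 ≤ θs := hθsmem.1
    have hθsle : θs ≤ x.1 :=
      le_of_tendsto_of_tendsto' hΘlim hY1 (fun n => hθle _)
    -- limit point
    have hzlim : Tendsto (fun n => ((Y n).1 - Θ n, (Y n).2)) atTop
        (𝓝 (x.1 - θs, x.2)) := (hY1.sub hΘlim).prodMk_nhds hY2
    have hzmem : ∀ n, ((Y n).1 - Θ n, (Y n).2) ∈ Sbar :=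
      fun n => ⟨sub_nonneg.2 (hθle _), (hyS _).2⟩
    have hlimmem : (x.1 - θs, x.2) ∈ Sbar := ⟨sub_nonneg.2 hθsle, hx.2⟩
    set m : ℝ := w * max (G - θs) 0 with hm
    set L : ℝ := g (x.1 - θs, x.2) with hL
    -- h x ≤ m + L
    obtain ⟨θx, _, _, _, hxmin⟩ := hval x hx
    have hc_lt : c < m + L := lt_of_lt_of_le hc (hxmin θs hθs0 hθsle)
    set c' : ℝ := (c - m + L) / 2 with hc'
    have hc'1 : c - m < c' := by simp only [hc']; linarith
    have hc'2 : c' < L := by simp only [hc']; linarith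
    -- g along z n eventually > c'
    have hzwithin : Tendsto (fun n => ((Y n).1 - Θ n, (Y n).2)) atTop
        (𝓝[Sbar] (x.1 - θs, x.2)) :=
      tendsto_nhdsWithin_of_tendsto_nhds_of_eventually_within _ hzlim
        (Eventually.of_forall hzmem)
    have hev1 : ∀ᶠ n in atTop, c' < g ((Y n).1 - Θ n, (Y n).2) :=
      hzwithin.eventually (hg _ hlimmem c' hc'2)
    -- w * max part converges to m
    have hmaxlim : Tendsto (fun n => w * max (G - Θ n) 0) atTop (𝓝 m) := by
      apply Tendsto.const_mul
      exact ((tendsto_const_nhds.sub hΘlim).max tendsto_const_nhds)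
    have hev2 : ∀ᶠ n in atTop, c - c' < w * max (G - Θ n) 0 :=
      hmaxlim.eventually (eventually_gt_nhds (by linarith : c - c' < m))
    obtain ⟨n, h1, h2⟩ := (hev1.and hev2).exists
    have heq := hθeq (φ n + N)
    have hle := hyc (φ n + N)
    rw [heq] at hle
    have : c < w * max (G - Θ n) 0 + g ((Y n).1 - Θ n, (Y n).2) := by linarith
    simp only [hY, hΘ] at this
    linarith [this, hle]
  · -- attainment
    intro x hx
    obtain ⟨θ, h1, h2, h3, _⟩ := hval x hx
    exact ⟨θ, h1, h2, h3⟩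
end

section
/- (Topology of the no-transaction region.) Let C be a transaction cost function with C_min := C(0) > 0. Then: (i) 𝒮_∅ is open in the subspace topology of 𝒮̄; (ii) the closure of 𝒮_∅ in 𝒮̄ equals { x ∈ 𝒮̄ : x₀ + x₁ ≤ C(−x₁) }; (iii) the boundary of 𝒮_∅ relative to 𝒮̄ equals { x ∈ 𝒮̄ : x₀ + x₁ = C(−x₁) }; and (iv) { x ∈ 𝒮̄ : x₀ + x₁ < C_min } ⊆ 𝒮_∅. -/
open Set Filter

lemma dset_empty_iff (C : ℝ → ℝ) (hsm : StrictMono (fun d => d + C d)) (x : ℝ × ℝ) :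
    Dset C x = ∅ ↔ x.1 + x.2 < C (-x.2) := by
  constructor
  · intro h
    by_contra hlt
    push_neg at hlt
    have : (-x.2) ∈ Dset C x := by
      simp only [Dset, Gam, Sbar, Set.mem_setOf_eq, Set.mem_prod, Set.mem_Ici]
      constructor <;> simp <;> linarith
    rw [h] at this
    exact this
  · intro hlt
    ext d
    simp only [Dset, Gam, Sbar, Set.mem_setOf_eq, Set.mem_prod, Set.mem_Ici,
      Set.mem_empty_iff_false, iff_false, not_and]
    intro h1 h2
    have hd : -x.2 ≤ d := by linarith
    have := hsm.monotone hd
    linarith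

lemma sempty_eq (C : ℝ → ℝ) (hsm : StrictMono (fun d => d + C d)) :
    Sempty C = {x | x ∈ Sbar ∧ x.1 + x.2 < C (-x.2)} := by
  ext x
  simp only [Sempty, Set.mem_setOf_eq, dset_empty_iff C hsm]

/-- (Topology of the no-transaction region, relative to the subspace `𝒮̄`.) -/
theorem no_transaction_region_topology
    (C : ℝ → ℝ) (hC : IsCostFn C) :
    IsOpen ((Subtype.val ⁻¹' Sempty C : Set ↥Sbar)) ∧
    closure ((Subtype.val ⁻¹' Sempty C : Set ↥Sbar))
      = Subtype.val ⁻¹' {x : ℝ × ℝ | x ∈ Sbar ∧ x.1 + x.2 ≤ C (-x.2)} ∧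
    frontier ((Subtype.val ⁻¹' Sempty C : Set ↥Sbar))
      = Subtype.val ⁻¹' {x : ℝ × ℝ | x ∈ Sbar ∧ x.1 + x.2 = C (-x.2)} ∧
    {x : ℝ × ℝ | x ∈ Sbar ∧ x.1 + x.2 < C 0} ⊆ Sempty C := by
  obtain ⟨hcont, hmono, hpos, hsm, hrange⟩ := hC
  -- preliminary: the preimage set as a sublevel set
  have hSe : Sempty C = {x : ℝ × ℝ | x ∈ Sbar ∧ x.1 + x.2 < C (-x.2)} := sempty_eq C hsm
  have hpre : (Subtype.val ⁻¹' Sempty C : Set ↥Sbar)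
      = Subtype.val ⁻¹' {x : ℝ × ℝ | x.1 + x.2 < C (-x.2)} := by
    ext z
    simp [hSe, z.2]
  have hopen : IsOpen ((Subtype.val ⁻¹' Sempty C : Set ↥Sbar)) := by
    rw [hpre]
    exact (isOpen_lt (continuous_fst.add continuous_snd)
      (hcont.comp continuous_snd.neg)).preimage continuous_subtype_val
  have hclosure : closure ((Subtype.val ⁻¹' Sempty C : Set ↥Sbar))
      = Subtype.val ⁻¹' {x : ℝ × ℝ | x ∈ Sbar ∧ x.1 + x.2 ≤ C (-x.2)} := by
    apply Set.Subset.antisymm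
    · -- closure ⊆ closed superset
      apply closure_minimal
      · intro z hz
        rw [hpre] at hz
        exact ⟨z.2, le_of_lt hz⟩
      · have : (Subtype.val ⁻¹' {x : ℝ × ℝ | x ∈ Sbar ∧ x.1 + x.2 ≤ C (-x.2)} : Set ↥Sbar)
            = Subtype.val ⁻¹' {x : ℝ × ℝ | x.1 + x.2 ≤ C (-x.2)} := by
          ext z; simp [z.2]
        rw [this]
        exact (isClosed_le (continuous_fst.add continuous_snd)
          (hcont.comp continuous_snd.neg)).preimage continuous_subtype_val
    · intro z hz
      obtain ⟨hzS, hzle⟩ := hz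
      rcases lt_or_eq_of_le hzle with hlt | heq
      · apply subset_closure
        rw [hpre]; exact hlt
      -- boundary case: build an approximating sequence
      · have hx1 : (0:ℝ) ≤ (z : ℝ × ℝ).1 := z.2.1
        set x : ℝ × ℝ := (z : ℝ × ℝ) with hxdef
        rw [mem_closure_iff_seq_limit]
        rcases lt_or_eq_of_le hx1 with hx1pos | hx1zero
        · -- x.1 > 0 : shrink first coordinate
          have hseq : ∀ n : ℕ, ((x.1 - x.1 / (n + 1), x.2) : ℝ × ℝ) ∈ Sbar := by
            intro n
            constructor
            · have h1 : x.1 / (n + 1) ≤ x.1 := by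
                apply div_le_self (le_of_lt hx1pos)
                have : (0:ℝ) ≤ (n:ℝ) := Nat.cast_nonneg n
                linarith
              simp only [Set.mem_Ici]; linarith
            · exact z.2.2
          refine ⟨fun n => ⟨(x.1 - x.1 / (n + 1), x.2), hseq n⟩, ?_, ?_⟩
          · intro n
            rw [hpre]
            have hpos' : 0 < x.1 / ((n:ℝ) + 1) := by positivity
            show (x.1 - x.1 / (n + 1)) + x.2 < C (-x.2)
            linarith
          · rw [tendsto_subtype_rng]
            have h1 : Tendsto (fun n : ℕ => x.1 - x.1 / (n + 1)) atTop (nhds x.1) := by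
              have := (tendsto_one_div_add_atTop_nhds_zero_nat.const_mul x.1)
              have h2 : Tendsto (fun n : ℕ => x.1 / (n + 1)) atTop (nhds 0) := by
                simpa [div_eq_mul_inv, mul_comm, one_div] using this
              simpa using tendsto_const_nhds.sub h2
            have := h1.prodMk_nhds (tendsto_const_nhds : Tendsto (fun _ : ℕ => x.2) atTop (nhds x.2))
            simpa using this
        · -- x.1 = 0 : then x.2 = C (-x.2) > 0, shrink second coordinate
          have hx2eq : x.2 = C (-x.2) := by rw [← hx1zero] at heq; linarith
          have hC0 : C 0 ≤ C (-x.2) := by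
            apply hmono; simp
          have hx2pos : 0 < x.2 := by linarith
          have hseq : ∀ n : ℕ, ((0, x.2 - x.2 / (n + 1)) : ℝ × ℝ) ∈ Sbar := by
            intro n
            constructor
            · simp
            · have h1 : x.2 / (n + 1) ≤ x.2 := by
                apply div_le_self (le_of_lt hx2pos)
                have : (0:ℝ) ≤ (n:ℝ) := Nat.cast_nonneg n
                linarith
              simp only [Set.mem_Ici]; linarith
          refine ⟨fun n => ⟨(0, x.2 - x.2 / (n + 1)), hseq n⟩, ?_, ?_⟩
          · intro n
            rw [hpre]
            have hpos' : 0 < x.2 / ((n:ℝ) + 1) := by positivity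
            show (0:ℝ) + (x.2 - x.2 / (n + 1)) < C (-(x.2 - x.2 / (n + 1)))
            have hlt : (-x.2 : ℝ) < -(x.2 - x.2 / (n + 1)) := by linarith
            have := hsm hlt
            simp only at this
            linarith
          · rw [tendsto_subtype_rng]
            have h2 : Tendsto (fun n : ℕ => x.2 - x.2 / (n + 1)) atTop (nhds x.2) := by
              have := (tendsto_one_div_add_atTop_nhds_zero_nat.const_mul x.2)
              have h3 : Tendsto (fun n : ℕ => x.2 / (n + 1)) atTop (nhds 0) := by
                simpa [div_eq_mul_inv, mul_comm, one_div] using this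
              simpa using tendsto_const_nhds.sub h3
            have := (tendsto_const_nhds : Tendsto (fun _ : ℕ => (0:ℝ)) atTop (nhds 0)).prodMk_nhds h2
            have hx : ((0 : ℝ), x.2) = x := Prod.ext hx1zero rfl
            simpa [hx] using this
  refine ⟨hopen, hclosure, ?_, ?_⟩
  · -- frontier
    rw [frontier, hopen.interior_eq, hclosure]
    ext z
    simp only [Set.mem_diff, Set.mem_preimage, Set.mem_setOf_eq, hSe]
    have hz : (z : ℝ × ℝ) ∈ Sbar := z.2
    constructor
    · rintro ⟨⟨-, hle⟩, hn⟩
      refine ⟨hz, ?_⟩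
      rcases lt_or_eq_of_le hle with h | h
      · exact absurd ⟨hz, h⟩ hn
      · exact h
    · rintro ⟨-, heq⟩
      exact ⟨⟨hz, le_of_eq heq⟩, fun h => by linarith [h.2]⟩
  · -- minimal-cost sublevel set is contained in Sempty
    intro x hx
    obtain ⟨hxS, hxlt⟩ := hx
    rw [hSe]
    refine ⟨hxS, lt_of_lt_of_le hxlt ?_⟩
    apply hmono; simp
end
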